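/- arXiv:2405.09457 — 4 statements merged into one kernel-verified Lean document; each statement's English description precedes it below -/
import Mathlib

section
/- For all integers m ≥ ks, the numbers a(m, s) satisfy the recurrence ∑_{i=0}^{s} (−1)^i · C(s, i) · a(m−i, s) = n^s, where C(s, i) denotes the binomial coefficient. (When n < k no horizontal placement exists, so all k-mers are vertical.) -/
/-- The set of sites occupied by a horizontal `k`-mer starting at column `c`, row `r`. -/
def horizKmer (k c r : ℕ) : Finset (ℕ × ℕ) :=
  (Finset.range k).image fun i => (c + i, r)

/-- The set of sites occupied by a vertical `k`-mer at column `c` starting at row `r`. -/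
def vertKmer (k c r : ℕ) : Finset (ℕ × ℕ) :=
  (Finset.range k).image fun i => (c, r + i)

/-- A `k`-mer placement on the `n × m` lattice with free boundary conditions,
identified with its set of occupied sites `(c, r)`, `1 ≤ c ≤ n`, `1 ≤ r ≤ m`. -/
def IsFreePlacement (k n m : ℕ) (p : Finset (ℕ × ℕ)) : Prop :=
  (∃ c r, 1 ≤ c ∧ c + k ≤ n + 1 ∧ 1 ≤ r ∧ r ≤ m ∧ p = horizKmer k c r) ∨
  (∃ c r, 1 ≤ c ∧ c ≤ n ∧ 1 ≤ r ∧ r + k ≤ m + 1 ∧ p = vertKmer k c r)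

/-- A configuration of `s` `k`-mers on the `n × m` lattice with free boundary
conditions: a set of `s` placements whose occupied site sets are pairwise disjoint. -/
def IsFreeConfig (k n m s : ℕ) (C : Finset (Finset (ℕ × ℕ))) : Prop :=
  C.card = s ∧ (∀ p ∈ C, IsFreePlacement k n m p) ∧
    (C : Set (Finset (ℕ × ℕ))).Pairwise fun p q => Disjoint p q

/-- `a(m, s)`: the number of configurations of `s` `k`-mers on the `n × m`
lattice with free boundary conditions. -/
noncomputable def freeCount (k n m s : ℕ) : ℕ :=
  {C | IsFreeConfig k n m s C}.ncard

/-!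
Since `n < k`, every `k`-mer is vertical, so a configuration is determined by the set of its
starting sites: in each column these rows are pairwise at distance at least `k`, and they range
over `L = m + 1 - k` rows. Let `N_U(L, s)` count such sets for a set `U` of columns. For one
column, sorting by whether row `L + 1` is used gives
`N(L + 1, j + 1) - N(L, j + 1) = N(L + 1 - k, j)`, hence `Δ^j N(·, j) = 1` once
`L ≥ (k - 1)(j - 1)`. Splitting off one column writes `N_U` as a sum of products, and the
discrete Leibniz rule `Δ^(a+b) (f g) = C(a+b, a) · Δ^a f · Δ^b g` (for `f`, `g` with constant
`a`-th and `b`-th differences) and the binomial theorem give `Δ^s N_U(·, s) = #U^s`.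
The left-hand side of the recurrence is `Δ^s` of `a(·, s)` at `m - s`, and `m ≥ k s` is exactly
what puts `m - s` in the range where these identities hold.
-/

open Finset

section FwdDiff

variable {M : Type*} [AddCommMonoid M] (h : M)

lemma fwdDiff_mul {R : Type*} [Ring R] (f g : M → R) :
    fwdDiff h (f * g) = fwdDiff h f * (fun x => g (x + h)) + f * fwdDiff h g := by
  funext x
  simp only [fwdDiff, Pi.add_apply, Pi.mul_apply, sub_mul, mul_sub]
  abel

theorem fwdDiff_iter_mul_eq_const {R : Type*} [CommRing R] {f g : M → R} {a b : ℕ} {c d : R}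
    (hf : (fwdDiff h)^[a] f = fun _ => c) (hg : (fwdDiff h)^[b] g = fun _ => d) :
    (fwdDiff h)^[a + b] (f * g) = fun _ => ((a + b).choose a : R) * c * d := by
  induction a generalizing b f g with
  | zero =>
    rw [Function.iterate_zero, id_eq] at hf
    subst hf
    rw [zero_add, Nat.choose_zero_right, Nat.cast_one, one_mul,
      show (fun _ => c) * g = c • g from rfl, fwdDiff_iter_const_smul, hg]
    rfl
  | succ a iha =>
    induction b generalizing g with
    | zero =>
      subst hg
      rw [show f * (fun _ => d) = d • f from funext fun _ => mul_comm _ _, fwdDiff_iter_const_smul,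
        add_zero, hf, Nat.choose_self, Nat.cast_one, one_mul]
      funext x
      exact mul_comm _ _
    | succ b ihb =>
      have hshift : (fwdDiff h)^[b + 1] (fun x => g (x + h)) = fun _ => d := by
        funext x; rw [fwdDiff_iter_comp_add, hg]
      have h₁ := iha (f := fwdDiff h f) (by rwa [← Function.iterate_succ_apply]) hshift
      have h₂ := ihb (g := fwdDiff h g) (by rwa [← Function.iterate_succ_apply])
      rw [show a + 1 + (b + 1) = (a + (b + 1)) + 1 by omega, Function.iterate_succ_apply,
        fwdDiff_mul, fwdDiff_iter_add, h₁, show a + (b + 1) = a + 1 + b by omega, h₂]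
      funext x
      simp only [Pi.add_apply]
      rw [show a + 1 + b + 1 = (a + 1 + b) + 1 by omega, Nat.choose_succ_succ' (a + 1 + b) a]
      push_cast
      ring

end FwdDiff

theorem sum_alternating_choose_mul_sub_eq_fwdDiff_iter {R : Type*} [Ring R] (f : ℕ → R)
    {s m : ℕ} (hs : s ≤ m) :
    ∑ i ∈ range (s + 1), (-1 : R) ^ i * s.choose i * f (m - i) =
      (fwdDiff 1)^[s] (fun t => f (m - s + t)) 0 := by
  rw [fwdDiff_iter_eq_sum_shift, ← sum_range_reflect]
  refine sum_congr rfl fun i hi => ?_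
  have hi : i ≤ s := Nat.lt_succ_iff.mp (mem_range.mp hi)
  rw [zero_add, zsmul_eq_mul, smul_eq_mul, mul_one, show s + 1 - 1 - i = s - i by omega,
    show m - (s - i) = m - s + i by omega, Nat.choose_symm hi]
  push_cast
  rfl

section VertPackings

def IsVertSeparated (k : ℕ) (A : Finset (ℕ × ℕ)) : Prop :=
  ∀ p ∈ A, ∀ q ∈ A, p.1 = q.1 → p.2 < q.2 → p.2 + k ≤ q.2

instance (k : ℕ) : DecidablePred (IsVertSeparated k) := fun A => by
  unfold IsVertSeparated; infer_instance

def vertPackings (k : ℕ) (cols : Finset ℕ) (L s : ℕ) : Finset (Finset (ℕ × ℕ)) :=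
  ((cols ×ˢ Icc 1 L).powersetCard s).filter (IsVertSeparated k)

variable {k : ℕ}

lemma IsVertSeparated.mono {A B : Finset (ℕ × ℕ)} (hA : IsVertSeparated k A) (hBA : B ⊆ A) :
    IsVertSeparated k B :=
  fun p hp q hq => hA p (hBA hp) q (hBA hq)

lemma mem_vertPackings {cols : Finset ℕ} {L s : ℕ} {A : Finset (ℕ × ℕ)} :
    A ∈ vertPackings k cols L s ↔ A ⊆ cols ×ˢ Icc 1 L ∧ #A = s ∧ IsVertSeparated k A := by
  rw [vertPackings, mem_filter, mem_powersetCard, and_assoc]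

lemma card_vertPackings_zero (cols : Finset ℕ) (L : ℕ) : #(vertPackings k cols L 0) = 1 := by
  rw [card_eq_one]
  refine ⟨∅, eq_singleton_iff_unique_mem.mpr ⟨?_, fun A hA => ?_⟩⟩
  · exact mem_vertPackings.mpr ⟨empty_subset _, card_empty, by simp [IsVertSeparated]⟩
  · exact card_eq_zero.mp (mem_vertPackings.mp hA).2.1

lemma vertPackings_empty (L s : ℕ) (hs : s ≠ 0) : vertPackings k ∅ L s = ∅ := by
  rw [vertPackings, empty_product, powersetCard_eq_empty.mpr (by simpa [Nat.pos_iff_ne_zero]),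
    filter_empty]

lemma isVertSeparated_union {U V : Finset ℕ} (hUV : Disjoint U V) {L : ℕ}
    {B B' : Finset (ℕ × ℕ)} (hB : B ⊆ U ×ˢ Icc 1 L) (hB' : B' ⊆ V ×ˢ Icc 1 L)
    (hsB : IsVertSeparated k B) (hsB' : IsVertSeparated k B') :
    IsVertSeparated k (B ∪ B') := by
  have hcol : ∀ p ∈ B, ∀ q ∈ B', p.1 ≠ q.1 := fun p hp q hq =>
    fun h => disjoint_left.mp hUV (mem_product.mp (hB hp)).1 (h ▸ (mem_product.mp (hB' hq)).1)
  intro p hp q hq hpq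
  rcases mem_union.mp hp with hp | hp <;> rcases mem_union.mp hq with hq | hq
  · exact hsB p hp q hq hpq
  · exact absurd hpq (hcol p hp q hq)
  · exact absurd hpq.symm (hcol q hq p hp)
  · exact hsB' p hp q hq hpq

lemma union_mem_vertPackings_union {U V : Finset ℕ} (hUV : Disjoint U V) {L j j' : ℕ}
    {B B' : Finset (ℕ × ℕ)} (hB : B ∈ vertPackings k U L j) (hB' : B' ∈ vertPackings k V L j') :
    B ∪ B' ∈ vertPackings k (U ∪ V) L (j + j') := by
  obtain ⟨hBsub, rfl, hsB⟩ := mem_vertPackings.mp hB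
  obtain ⟨hB'sub, rfl, hsB'⟩ := mem_vertPackings.mp hB'
  refine mem_vertPackings.mpr ⟨union_subset ?_ ?_, card_union_of_disjoint ?_,
    isVertSeparated_union hUV hBsub hB'sub hsB hsB'⟩
  · exact hBsub.trans (product_subset_product_left subset_union_left)
  · exact hB'sub.trans (product_subset_product_left subset_union_right)
  · exact (disjoint_product.mpr (Or.inl hUV)).mono hBsub hB'sub

lemma filter_fst_mem_union_of_subset {α β : Type*} [DecidableEq α] [DecidableEq β]
    {U V : Finset α} (hUV : Disjoint U V) {Y : Finset β} {B B' : Finset (α × β)}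
    (hB : B ⊆ U ×ˢ Y) (hB' : B' ⊆ V ×ˢ Y) :
    (B ∪ B').filter (·.1 ∈ U) = B ∧ (B ∪ B').filter (·.1 ∉ U) = B' := by
  have hBU : ∀ p ∈ B, p.1 ∈ U := fun p hp => (mem_product.mp (hB hp)).1
  have hB'U : ∀ p ∈ B', p.1 ∉ U := fun p hp hpU =>
    disjoint_left.mp hUV hpU (mem_product.mp (hB' hp)).1
  constructor
  · rw [filter_union, filter_true_of_mem hBU, filter_false_of_mem hB'U, union_empty]
  · rw [filter_union, filter_false_of_mem fun p hp h => h (hBU p hp), filter_true_of_mem hB'U,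
      empty_union]

theorem card_vertPackings_union {U V : Finset ℕ} (hUV : Disjoint U V) (L s : ℕ) :
    #(vertPackings k (U ∪ V) L s) =
      ∑ p ∈ antidiagonal s, #(vertPackings k U L p.1) * #(vertPackings k V L p.2) := by
  simp_rw [← card_product]
  rw [← card_sigma]
  refine card_nbij' (fun A => ⟨(#(A.filter (·.1 ∈ U)), #(A.filter (·.1 ∉ U))),
      (A.filter (·.1 ∈ U), A.filter (·.1 ∉ U))⟩) (fun P => P.2.1 ∪ P.2.2) ?_ ?_ ?_ ?_
  · intro A hA
    obtain ⟨hsub, hcard, hsep⟩ := mem_vertPackings.mp hA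
    simp only [coe_sigma, Set.mem_sigma_iff, mem_coe, HasAntidiagonal.mem_antidiagonal,
      mem_product, mem_vertPackings]
    refine ⟨by rw [card_filter_add_card_filter_not, hcard],
      ⟨?_, trivial, hsep.mono (filter_subset _ _)⟩, ⟨?_, trivial, hsep.mono (filter_subset _ _)⟩⟩
    · intro p hp
      obtain ⟨hpA, hpU⟩ := mem_filter.mp hp
      exact mem_product.mpr ⟨hpU, (mem_product.mp (hsub hpA)).2⟩
    · intro p hp
      obtain ⟨hpA, hpU⟩ := mem_filter.mp hp
      obtain ⟨hpUV, hpL⟩ := mem_product.mp (hsub hpA)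
      exact mem_product.mpr ⟨(mem_union.mp hpUV).resolve_left hpU, hpL⟩
  · rintro ⟨⟨j, j'⟩, B, B'⟩ hP
    simp only [coe_sigma, Set.mem_sigma_iff, mem_coe, HasAntidiagonal.mem_antidiagonal,
      mem_product] at hP
    obtain ⟨rfl, hB, hB'⟩ := hP
    exact union_mem_vertPackings_union hUV hB hB'
  · intro A _
    exact filter_union_filter_not_eq _ _
  · rintro ⟨⟨j, j'⟩, B, B'⟩ hP
    simp only [coe_sigma, Set.mem_sigma_iff, mem_coe, HasAntidiagonal.mem_antidiagonal,
      mem_product, mem_vertPackings] at hP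
    obtain ⟨-, ⟨hB, rfl, -⟩, ⟨hB', rfl, -⟩⟩ := hP
    obtain ⟨hfilter, hfilter'⟩ := filter_fst_mem_union_of_subset hUV hB hB'
    simp only [hfilter, hfilter']

lemma IsVertSeparated.insert {A : Finset (ℕ × ℕ)} (hA : IsVertSeparated k A) {p : ℕ × ℕ}
    (hp : ∀ q ∈ A, q.1 = p.1 → q.2 + k ≤ p.2) : IsVertSeparated k (insert p A) := by
  intro x hx y hy hxy hlt
  rcases mem_insert.mp hx with rfl | hxA <;> rcases mem_insert.mp hy with rfl | hyA
  · exact absurd hlt (lt_irrefl _)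
  · have := hp y hyA hxy.symm; omega
  · exact hp x hxA hxy
  · exact hA x hxA y hyA hxy hlt

lemma mem_singleton_product_Icc {c L : ℕ} {p : ℕ × ℕ} :
    p ∈ ({c} : Finset ℕ) ×ˢ Icc 1 L ↔ p.1 = c ∧ 1 ≤ p.2 ∧ p.2 ≤ L := by
  rw [mem_product, mem_singleton, mem_Icc]

lemma filter_not_mem_vertPackings_singleton (c L j : ℕ) :
    (vertPackings k {c} (L + 1) j).filter ((c, L + 1) ∉ ·) = vertPackings k {c} L j := by
  ext A
  simp only [mem_filter, mem_vertPackings]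
  constructor
  · rintro ⟨⟨hsub, hcard, hsep⟩, htop⟩
    refine ⟨fun p hp => ?_, hcard, hsep⟩
    obtain ⟨hc, h1, hL⟩ := mem_singleton_product_Icc.mp (hsub hp)
    have hlt : p.2 ≠ L + 1 := fun h => htop (Prod.ext (x := p) (y := (c, L + 1)) hc h ▸ hp)
    exact mem_singleton_product_Icc.mpr ⟨hc, h1, by omega⟩
  · rintro ⟨hsub, hcard, hsep⟩
    refine ⟨⟨hsub.trans (product_subset_product_right (Icc_subset_Icc_right L.le_succ)),
      hcard, hsep⟩, fun htop => ?_⟩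
    have := (mem_singleton_product_Icc.mp (hsub htop)).2.2
    omega

lemma card_filter_mem_vertPackings_singleton (hk : 1 ≤ k) (c L j : ℕ) :
    #((vertPackings k {c} (L + 1) (j + 1)).filter ((c, L + 1) ∈ ·)) =
      #(vertPackings k {c} (L + 1 - k) j) := by
  refine card_nbij' (·.erase (c, L + 1)) (insert (c, L + 1)) ?_ ?_ ?_ ?_
  · intro A hA
    simp only [mem_coe, mem_filter, mem_vertPackings] at hA ⊢
    obtain ⟨⟨hsub, hcard, hsep⟩, htop⟩ := hA
    refine ⟨fun p hp => ?_, by rw [card_erase_of_mem htop, hcard, Nat.add_sub_cancel],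
      hsep.mono (erase_subset _ _)⟩
    obtain ⟨hne, hpA⟩ := mem_erase.mp hp
    obtain ⟨hc, h1, hL⟩ := mem_singleton_product_Icc.mp (hsub hpA)
    have hlt : p.2 < L + 1 := lt_of_le_of_ne hL fun h => hne (Prod.ext hc h)
    have := hsep p hpA _ htop hc hlt
    exact mem_singleton_product_Icc.mpr ⟨hc, h1, by simp only at this; omega⟩
  · intro B hB
    simp only [mem_coe, mem_filter, mem_vertPackings] at hB ⊢
    obtain ⟨hsub, hcard, hsep⟩ := hB
    have hbelow : ∀ q ∈ B, q.2 + k ≤ L + 1 := fun q hq => by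
      have := (mem_singleton_product_Icc.mp (hsub hq)).2; omega
    have htop : (c, L + 1) ∉ B := fun h => by have := hbelow _ h; simp only at this; omega
    refine ⟨⟨insert_subset (mem_singleton_product_Icc.mpr ⟨rfl, by omega, le_rfl⟩) fun q hq => ?_,
      by rw [card_insert_of_notMem htop, hcard], hsep.insert fun q hq _ => hbelow q hq⟩,
      mem_insert_self _ _⟩
    obtain ⟨hc, h1, hL⟩ := mem_singleton_product_Icc.mp (hsub hq)
    exact mem_singleton_product_Icc.mpr ⟨hc, h1, by omega⟩
  · intro A hA
    exact insert_erase (mem_filter.mp hA).2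
  · intro B hB
    refine erase_insert fun h => ?_
    have := (mem_singleton_product_Icc.mp ((mem_vertPackings.mp hB).1 h)).2.2
    omega

theorem card_vertPackings_singleton_succ_succ (hk : 1 ≤ k) (c L j : ℕ) :
    #(vertPackings k {c} (L + 1) (j + 1)) =
      #(vertPackings k {c} L (j + 1)) + #(vertPackings k {c} (L + 1 - k) j) := by
  rw [← card_filter_add_card_filter_not ((c, L + 1) ∉ ·), filter_not_mem_vertPackings_singleton]
  simp_rw [not_not, card_filter_mem_vertPackings_singleton hk]

theorem fwdDiff_iter_card_vertPackings_singleton (hk : 1 ≤ k) (c j L₀ : ℕ)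
    (hL₀ : (k - 1) * (j - 1) ≤ L₀) :
    (fwdDiff 1)^[j] (fun t => (#(vertPackings k {c} (t + L₀) j) : ℤ)) = fun _ => 1 := by
  induction j generalizing L₀ with
  | zero => simp [card_vertPackings_zero]
  | succ j ih =>
    have hΔ : fwdDiff 1 (fun t => (#(vertPackings k {c} (t + L₀) (j + 1)) : ℤ)) =
        fun t => (#(vertPackings k {c} (t + L₀ + 1 - k) j) : ℤ) := by
      funext t
      rw [fwdDiff, add_right_comm, card_vertPackings_singleton_succ_succ hk]
      push_cast
      ring
    rw [Function.iterate_succ_apply, hΔ]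
    rcases j with _ | j
    · simp [card_vertPackings_zero]
    · have hmul : (k - 1) * (j + 1) = (k - 1) * j + (k - 1) := by ring
      simp only [Nat.add_sub_cancel] at hL₀
      simp_rw [show ∀ t, t + L₀ + 1 - k = t + (L₀ + 1 - k) by omega]
      exact ih _ (by simp only [Nat.add_sub_cancel]; omega)

theorem fwdDiff_iter_card_vertPackings (hk : 1 ≤ k) (cols : Finset ℕ) (s L₀ : ℕ)
    (hL₀ : (k - 1) * (s - 1) ≤ L₀) :
    (fwdDiff 1)^[s] (fun t => (#(vertPackings k cols (t + L₀) s) : ℤ)) =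
      fun _ => (#cols : ℤ) ^ s := by
  induction cols using Finset.induction_on generalizing s L₀ with
  | empty =>
    rcases s with _ | s
    · simp [card_vertPackings_zero]
    · simp only [vertPackings_empty _ _ (Nat.succ_ne_zero s), card_empty, Nat.cast_zero]
      exact Function.iterate_fixed (fwdDiff_const 1 0) _
  | insert i cols hi ih =>
    have hsplit : (fun t => (#(vertPackings k (insert i cols) (t + L₀) s) : ℤ)) =
        ∑ p ∈ antidiagonal s, (fun t => (#(vertPackings k {i} (t + L₀) p.1) : ℤ)) *
          fun t => (#(vertPackings k cols (t + L₀) p.2) : ℤ) := by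
      funext t
      rw [insert_eq, card_vertPackings_union (disjoint_singleton_left.mpr hi)]
      simp
    have hbound : ∀ j ≤ s, (k - 1) * (j - 1) ≤ L₀ := fun j hj =>
      le_trans (Nat.mul_le_mul_left _ (by omega)) hL₀
    rw [hsplit, fwdDiff_iter_finsetSum, card_insert_of_notMem hi, Nat.cast_add, Nat.cast_one,
      add_comm, (Commute.one_left _).add_pow']
    funext t
    rw [Finset.sum_apply]
    refine sum_congr rfl fun p hp => ?_
    rw [← HasAntidiagonal.mem_antidiagonal.mp hp,
      fwdDiff_iter_mul_eq_const 1
        (fwdDiff_iter_card_vertPackings_singleton hk i p.1 L₀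
          (hbound _ (HasAntidiagonal.antidiagonal.fst_le hp)))
        (ih p.2 L₀ (hbound _ (HasAntidiagonal.antidiagonal.snd_le hp))), one_pow, nsmul_eq_mul]
    ring

lemma mem_vertKmer {c r : ℕ} {q : ℕ × ℕ} :
    q ∈ vertKmer k c r ↔ q.1 = c ∧ r ≤ q.2 ∧ q.2 < r + k := by
  obtain ⟨a, b⟩ := q
  simp only [vertKmer, mem_image, mem_range, Prod.mk.injEq]
  constructor
  · rintro ⟨i, hi, rfl, rfl⟩
    omega
  · rintro ⟨rfl, h₁, h₂⟩
    exact ⟨b - r, by omega, rfl, by omega⟩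

lemma vertKmer_injective (hk : 1 ≤ k) : Function.Injective (Function.uncurry (vertKmer k)) := by
  rintro ⟨c, r⟩ ⟨c', r'⟩ h
  simp only [Function.uncurry_apply_pair] at h
  have h₁ : (c, r) ∈ vertKmer k c' r' := h ▸ mem_vertKmer.mpr ⟨rfl, le_rfl, by omega⟩
  have h₂ : (c', r') ∈ vertKmer k c r := h ▸ mem_vertKmer.mpr ⟨rfl, le_rfl, by omega⟩
  rw [mem_vertKmer] at h₁ h₂
  exact Prod.ext h₁.1 (by simp only at h₁ h₂; omega)

lemma disjoint_vertKmer_iff {c r c' r' : ℕ} :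
    Disjoint (vertKmer k c r) (vertKmer k c' r') ↔ c ≠ c' ∨ r + k ≤ r' ∨ r' + k ≤ r := by
  rw [disjoint_left]
  constructor
  · intro h
    by_contra! hcon
    obtain ⟨rfl, h₁, h₂⟩ := hcon
    exact h (mem_vertKmer (q := (c, max r r')).mpr ⟨rfl, le_max_left r r', by omega⟩)
      (mem_vertKmer.mpr ⟨rfl, le_max_right r r', by omega⟩)
  · intro h q hq hq'
    rw [mem_vertKmer] at hq hq'
    omega

lemma pairwise_disjoint_image_vertKmer_iff (hk : 1 ≤ k) (A : Finset (ℕ × ℕ)) :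
    (↑(A.image (Function.uncurry (vertKmer k))) : Set (Finset (ℕ × ℕ))).Pairwise Disjoint ↔
      IsVertSeparated k A := by
  rw [coe_image, ((vertKmer_injective hk).injOn).pairwise_image]
  constructor
  · intro h p hp q hq hcol hlt
    have := disjoint_vertKmer_iff.mp (h hp hq fun hpq => hlt.ne (hpq ▸ rfl))
    omega
  · intro h p hp q hq hpq
    refine disjoint_vertKmer_iff.mpr ?_
    by_contra! hcon
    obtain ⟨hcol, h₁, h₂⟩ := hcon
    rcases lt_trichotomy p.2 q.2 with hlt | heq | hgt
    · have := h p hp q hq hcol hlt; omega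
    · exact hpq (Prod.ext hcol heq)
    · have := h q hq p hp hcol.symm hgt; omega

lemma isFreePlacement_iff_of_lt {n m : ℕ} (hnk : n < k) {p : Finset (ℕ × ℕ)} :
    IsFreePlacement k n m p ↔
      p ∈ Function.uncurry (vertKmer k) '' ↑(Icc 1 n ×ˢ Icc 1 (m + 1 - k)) := by
  simp only [IsFreePlacement, coe_product, coe_Icc, Set.mem_image, Set.mem_prod, Set.mem_Icc,
    Prod.exists, Function.uncurry_apply_pair]
  constructor
  · rintro (⟨c, r, hc, hck, -⟩ | ⟨c, r, hc₁, hc₂, hr₁, hr₂, rfl⟩)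
    · omega
    · exact ⟨c, r, ⟨⟨hc₁, hc₂⟩, hr₁, by omega⟩, rfl⟩
  · rintro ⟨c, r, ⟨⟨hc₁, hc₂⟩, hr₁, hr₂⟩, rfl⟩
    exact Or.inr ⟨c, r, hc₁, hc₂, hr₁, by omega, rfl⟩

theorem freeCount_eq_card_vertPackings {n : ℕ} (hnk : n < k) (m s : ℕ) :
    freeCount k n m s = #(vertPackings k (Icc 1 n) (m + 1 - k) s) := by
  have hk : 1 ≤ k := by omega
  have hinj := vertKmer_injective hk
  have hconfigs : {C | IsFreeConfig k n m s C} =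
      (fun A : Finset (ℕ × ℕ) => A.image (Function.uncurry (vertKmer k))) ''
        ↑(vertPackings k (Icc 1 n) (m + 1 - k) s) := by
    ext C
    simp only [IsFreeConfig, isFreePlacement_iff_of_lt hnk, Set.mem_ofPred_eq, Set.mem_image,
      mem_coe, mem_vertPackings]
    constructor
    · rintro ⟨hcard, hplace, hpair⟩
      obtain ⟨A, hA, rfl⟩ := subset_set_image_iff.mp hplace
      refine ⟨A, ⟨hA, ?_, ?_⟩, rfl⟩
      · rwa [card_image_of_injective _ hinj] at hcard
      · exact (pairwise_disjoint_image_vertKmer_iff hk A).mp hpair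
    · rintro ⟨A, ⟨hA, hcard, hsep⟩, rfl⟩
      refine ⟨by rw [card_image_of_injective _ hinj, hcard], fun p hp => ?_,
        (pairwise_disjoint_image_vertKmer_iff hk A).mpr hsep⟩
      obtain ⟨q, hq, rfl⟩ := mem_image.mp hp
      exact Set.mem_image_of_mem _ (hA hq)
  rw [freeCount, hconfigs, Set.ncard_image_of_injective _ (image_injective hinj),
    Set.ncard_coe_finset]

end VertPackings

theorem free_recurrence_narrow_general (k n s : ℕ) (hnk : n < k)
    (hs : 1 ≤ s) (m : ℕ) (hm : k * s ≤ m) :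
    ∑ i ∈ Finset.range (s + 1),
        (-1 : ℤ) ^ i * (s.choose i : ℤ) * (freeCount k n (m - i) s : ℤ) =
      (n : ℤ) ^ s := by
  have hk : 1 ≤ k := by omega
  have hks : k * (s - 1) = k * s - k := Nat.mul_sub_one k s
  have hk_le : k ≤ k * s := Nat.le_mul_of_pos_right k hs
  have hs_le : s - 1 ≤ k * (s - 1) := Nat.le_mul_of_pos_left _ hk
  set L₀ := m - s + 1 - k
  have hL₀ : (k - 1) * (s - 1) ≤ L₀ := by
    rw [Nat.sub_one_mul]
    omega
  have hshift : ∀ t, freeCount k n (m - s + t) s = #(vertPackings k (Icc 1 n) (t + L₀) s) :=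
    fun t => by rw [freeCount_eq_card_vertPackings hnk]; congr 2; omega
  rw [sum_alternating_choose_mul_sub_eq_fwdDiff_iter (fun x => (freeCount k n x s : ℤ))
    (le_trans (Nat.le_mul_of_pos_left s hk) hm)]
  simp_rw [hshift, fwdDiff_iter_card_vertPackings hk _ _ _ hL₀, Nat.card_Icc, Nat.add_sub_cancel]

/-- Recurrence for `k`-mer coverings, free boundary, `n < k` (all `k`-mers vertical):
`∑_{i=0}^{s} (-1)^i C(s,i) a(m-i, s) = n^s` for `m ≥ k s`. -/
theorem free_recurrence_narrow (k n s : ℕ) (hk : 2 ≤ k) (hn1 : 1 ≤ n) (hnk : n < k)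
    (hs : 1 ≤ s) (m : ℕ) (hm : k * s ≤ m) :
    ∑ i ∈ Finset.range (s + 1),
        (-1 : ℤ) ^ i * (s.choose i : ℤ) * (freeCount k n (m - i) s : ℤ) =
      (n : ℤ) ^ s :=
  free_recurrence_narrow_general k n s hnk hs m hm
end

section
/- For all integers m ≥ ks, the numbers b(m, s) satisfy the recurrence ∑_{i=0}^{s} (−1)^i · C(s, i) · b(m−i, s) = n^s, where C(s, i) denotes the binomial coefficient. (When n < k a horizontal placement would self-overlap around the cylinder, so all k-mers are vertical.) -/
/-- The set of sites occupied by a horizontal `k`-mer on a cylinder of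
circumference `n`, starting at column `c`, row `r`. -/
def cylHorizKmer (k n c r : ℕ) : Finset (ℕ × ℕ) :=
  (Finset.range k).image fun i => ((c + i - 1) % n + 1, r)

/-- A `k`-mer placement on the `n × m` lattice with cylinder boundary conditions
(periodic horizontally), identified with its set of occupied sites.  A horizontal
placement must occupy `k` pairwise distinct sites. -/
def IsCylPlacement (k n m : ℕ) (p : Finset (ℕ × ℕ)) : Prop :=
  (∃ c r, 1 ≤ c ∧ c ≤ n ∧ 1 ≤ r ∧ r ≤ m ∧ p = cylHorizKmer k n c r ∧ p.card = k) ∨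
  (∃ c r, 1 ≤ c ∧ c ≤ n ∧ 1 ≤ r ∧ r + k ≤ m + 1 ∧ p = vertKmer k c r)

/-- A configuration of `s` `k`-mers on the `n × m` lattice with cylinder boundary
conditions: a set of `s` placements whose occupied site sets are pairwise disjoint. -/
def IsCylConfig (k n m s : ℕ) (C : Finset (Finset (ℕ × ℕ))) : Prop :=
  C.card = s ∧ (∀ p ∈ C, IsCylPlacement k n m p) ∧
    (C : Set (Finset (ℕ × ℕ))).Pairwise fun p q => Disjoint p q

/-- `b(m, s)`: the number of configurations of `s` `k`-mers on the `n × m`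
lattice with cylinder boundary conditions. -/
noncomputable def cylCount (k n m s : ℕ) : ℕ :=
  {C | IsCylConfig k n m s C}.ncard

namespace CylAux


/-- t-th finite backward difference. -/
def D : ℕ → (ℕ → ℤ) → ℕ → ℤ
  | 0, f, x => f x
  | (j+1), f, x => D j f x - D j f (x-1)

def Gset (k m t : ℕ) : Finset (Finset ℕ) :=
  ((Finset.Icc 1 (m + 1 - k)).powersetCard t).filter
    (fun R => ∀ r ∈ R, ∀ r' ∈ R, r < r' → r + k ≤ r')

def G (k m t : ℕ) : ℕ := (Gset k m t).card

def gapOK (k : ℕ) (A : Finset (ℕ × ℕ)) : Prop :=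
  ∀ p ∈ A, ∀ q ∈ A, p.1 = q.1 → p.2 < q.2 → p.2 + k ≤ q.2

instance (k : ℕ) : DecidablePred (gapOK k) := fun A => by
  unfold gapOK; infer_instance

def Tset (k n m s : ℕ) : Finset (Finset (ℕ × ℕ)) :=
  ((Finset.Icc 1 n ×ˢ Finset.Icc 1 (m + 1 - k)).powersetCard s).filter (gapOK k)

def B (k n m s : ℕ) : ℕ := (Tset k n m s).card

lemma D_const (j : ℕ) (c : ℤ) : D j (fun _ => c) = fun _ => (if j = 0 then c else 0) := by
  induction j with
  | zero => rfl
  | succ j ih => funext x; simp [D, ih]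

lemma D_sum (j u : ℕ) (F : ℕ → ℕ → ℤ) (x : ℕ) :
    D j (fun m => ∑ t ∈ Finset.range u, F t m) x = ∑ t ∈ Finset.range u, D j (F t) x := by
  induction j generalizing x with
  | zero => rfl
  | succ j ih => simp [D, ih, Finset.sum_sub_distrib]

/-- eventually-constant differences vanish at higher order -/
lemma D_vanish (s : ℕ) (f : ℕ → ℤ) (c : ℕ) (K : ℤ)
    (h : ∀ y, c ≤ y → D s f y = K) :
    ∀ j x, c + j + 1 ≤ x → D (s + j + 1) f x = 0 := by
  intro j
  induction j with
  | zero =>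
      intro x hx
      show D (s+1) f x = 0
      simp only [D]
      rw [h x (by omega), h (x-1) (by omega)]; ring
  | succ j ih =>
      intro x hx
      show D (s+j+1+1) f x = 0
      have e : D ((s+j+1)+1) f x = D (s+j+1) f x - D (s+j+1) f (x-1) := rfl
      rw [e, ih x (by omega), ih (x-1) (by omega)]; ring

lemma D_closed (s : ℕ) (f : ℕ → ℤ) : ∀ x, D s f x =
    ∑ i ∈ Finset.range (s+1), (-1:ℤ)^i * (s.choose i : ℤ) * f (x - i) := by
  induction s with
  | zero => intro x; simp [D]
  | succ s ih =>
    intro x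
    have e : D (s+1) f x = D s f x - D s f (x-1) := rfl
    rw [e, ih x, ih (x-1)]
    rw [Finset.sum_range_succ' (fun i => (-1:ℤ)^i * (((s+1).choose i : ℕ) : ℤ) * f (x - i)) (s+1)]
    have h2 : ∀ i ∈ Finset.range (s+1),
        (-1:ℤ)^(i+1) * (((s+1).choose (i+1) : ℕ) : ℤ) * f (x - (i+1))
        = -((-1:ℤ)^i * (s.choose i : ℤ) * f ((x-1) - i))
          + (-1:ℤ)^(i+1) * (s.choose (i+1) : ℤ) * f (x - (i+1)) := by
      intro i _
      rw [Nat.choose_succ_succ, show (x:ℕ) - 1 - i = x - (i+1) by omega]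
      push_cast; ring
    rw [Finset.sum_congr rfl h2, Finset.sum_add_distrib]
    have h3 : ∑ i ∈ Finset.range (s+1), (-1:ℤ)^(i+1) * (s.choose (i+1) : ℤ) * f (x-(i+1))
        = (∑ i ∈ Finset.range (s+1), (-1:ℤ)^i * (s.choose i : ℤ) * f (x-i)) - f x := by
      rw [Finset.sum_range_succ (fun i => (-1:ℤ)^(i+1) * (s.choose (i+1):ℤ) * f (x-(i+1))) s,
          Finset.sum_range_succ' (fun i => (-1:ℤ)^i * (s.choose i : ℤ) * f (x - i)) s]
      simp [Nat.choose_succ_self]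
    rw [h3, Finset.sum_neg_distrib]
    simp only [pow_zero, Nat.choose_zero_right, Nat.cast_one, one_mul, Nat.sub_zero]
    ring
lemma D_leibniz (f g : ℕ → ℤ) : ∀ (s : ℕ) (x : ℕ),
    D s (fun m => f m * g m) x =
      ∑ j ∈ Finset.range (s+1), (s.choose j : ℤ) * D j f (x - (s - j)) * D (s - j) g x := by
  intro s
  induction s with
  | zero => intro x; simp [D]
  | succ s ih =>
    intro x
    have e : D (s+1) (fun m => f m * g m) x
        = D s (fun m => f m * g m) x - D s (fun m => f m * g m) (x-1) := rfl
    rw [e, ih x, ih (x-1), ← Finset.sum_sub_distrib]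
    have key : ∀ j ∈ Finset.range (s+1),
        (s.choose j : ℤ) * D j f (x - (s-j)) * D (s-j) g x
          - (s.choose j : ℤ) * D j f (x-1 - (s-j)) * D (s-j) g (x-1)
        = (s.choose j : ℤ) * D (j+1) f (x - ((s+1) - (j+1))) * D ((s+1)-(j+1)) g x
          + (s.choose j : ℤ) * D j f (x - ((s+1) - j)) * D ((s+1)-j) g x := by
      intro j hj
      simp only [Finset.mem_range] at hj
      have h1 : x - 1 - (s - j) = x - (s - j) - 1 := by omega
      have h2 : (s+1) - (j+1) = s - j := by omega
      have h3 : x - ((s+1) - j) = x - (s-j) - 1 := by omega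
      have h4 : (s+1) - j = (s-j) + 1 := by omega
      rw [h1, h2, h3, h4]
      have e1 : D (j+1) f (x - (s-j)) = D j f (x-(s-j)) - D j f (x-(s-j)-1) := rfl
      have e2 : D ((s-j)+1) g x = D (s-j) g x - D (s-j) g (x-1) := rfl
      rw [e1, e2]; ring
    rw [Finset.sum_congr rfl key, Finset.sum_add_distrib]
    rw [Finset.sum_range_succ' (fun j => (((s+1).choose j : ℕ) : ℤ) * D j f (x - ((s+1)-j)) * D ((s+1)-j) g x) (s+1)]
    have h5 : ∀ j ∈ Finset.range (s+1),
        (((s+1).choose (j+1) : ℕ) : ℤ) * D (j+1) f (x - ((s+1)-(j+1))) * D ((s+1)-(j+1)) g x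
        = (s.choose j : ℤ) * D (j+1) f (x - ((s+1)-(j+1))) * D ((s+1)-(j+1)) g x
          + (s.choose (j+1) : ℤ) * D (j+1) f (x - ((s+1)-(j+1))) * D ((s+1)-(j+1)) g x := by
      intro j _; rw [Nat.choose_succ_succ]; push_cast; ring
    rw [Finset.sum_congr rfl h5, Finset.sum_add_distrib]
    have h6 : ∑ j ∈ Finset.range (s+1), (s.choose (j+1) : ℤ) * D (j+1) f (x - ((s+1)-(j+1))) * D ((s+1)-(j+1)) g x
        = (∑ j ∈ Finset.range (s+1), (s.choose j : ℤ) * D j f (x - ((s+1)-j)) * D ((s+1)-j) g x)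
          - ((s.choose 0 : ℤ) * D 0 f (x-((s+1)-0)) * D ((s+1)-0) g x) := by
      rw [Finset.sum_range_succ (fun j => (s.choose (j+1) : ℤ) * D (j+1) f (x - ((s+1)-(j+1))) * D ((s+1)-(j+1)) g x) s,
          Finset.sum_range_succ' (fun j => (s.choose j : ℤ) * D j f (x - ((s+1)-j)) * D ((s+1)-j) g x) s]
      simp [Nat.choose_succ_self]
    rw [h6]
    simp only [Nat.choose_zero_right, Nat.cast_one, one_mul, Nat.sub_zero]
    ring
lemma mem_Gset {k m t : ℕ} {R : Finset ℕ} :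
    R ∈ Gset k m t ↔ (∀ r ∈ R, 1 ≤ r ∧ r + k ≤ m + 1) ∧ R.card = t ∧
      (∀ r ∈ R, ∀ r' ∈ R, r < r' → r + k ≤ r') := by
  simp only [Gset, Finset.mem_filter, Finset.mem_powersetCard]
  constructor
  · rintro ⟨⟨hsub, hcard⟩, hgap⟩
    refine ⟨fun r hr => ?_, hcard, hgap⟩
    have := hsub hr
    simp only [Finset.mem_Icc] at this
    omega
  · rintro ⟨hb, hcard, hgap⟩
    refine ⟨⟨fun r hr => ?_, hcard⟩, hgap⟩
    have := hb r hr
    simp only [Finset.mem_Icc]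
    omega

lemma G_zero (k m : ℕ) : G k m 0 = 1 := by
  have : Gset k m 0 = {∅} := by
    ext R
    simp only [mem_Gset, Finset.card_eq_zero, Finset.mem_singleton]
    constructor
    · rintro ⟨-, h, -⟩; exact h
    · rintro rfl; simp
  simp [G, this]

lemma G_small {k m t : ℕ} (hm : m < k) (ht : 1 ≤ t) : G k m t = 0 := by
  have : Gset k m t = ∅ := by
    ext R
    simp only [mem_Gset, Finset.notMem_empty, iff_false]
    rintro ⟨hb, hcard, -⟩
    have : R.Nonempty := by rw [← Finset.card_pos, hcard]; omega
    obtain ⟨r, hr⟩ := this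
    have := hb r hr
    omega
  simp [G, this]

lemma G_rec {k m t : ℕ} (hk : 1 ≤ k) (hm : k ≤ m) (ht : 1 ≤ t) :
    G k m t = G k (m-1) t + G k (m-k) (t-1) := by
  classical
  set a := m + 1 - k with ha
  have h1 : (Gset k m t).filter (fun R => ¬ a ∈ R) = Gset k (m-1) t := by
    ext R
    simp only [Finset.mem_filter, mem_Gset]
    constructor
    · rintro ⟨⟨hb, hc, hg⟩, hna⟩
      refine ⟨fun r hr => ?_, hc, hg⟩
      have := hb r hr
      have : r ≠ a := fun h => hna (h ▸ hr)
      have := hb r hr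
      omega
    · rintro ⟨hb, hc, hg⟩
      refine ⟨⟨fun r hr => ?_, hc, hg⟩, fun hain => ?_⟩
      · have := hb r hr; omega
      · have := hb a hain; omega
  have h2 : ((Gset k m t).filter (fun R => a ∈ R)).card = G k (m-k) (t-1) := by
    refine Finset.card_bij' (fun R _ => R.erase a) (fun R _ => insert a R) ?_ ?_ ?_ ?_
    · intro R hR
      simp only [Finset.mem_filter, mem_Gset] at hR
      obtain ⟨⟨hb, hc, hg⟩, hain⟩ := hR
      rw [mem_Gset]
      refine ⟨fun r hr => ?_, ?_, fun r hr r' hr' hlt => ?_⟩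
      · obtain ⟨hne, hrR⟩ := Finset.mem_erase.mp hr
        have h3 := hb r hrR
        rcases lt_trichotomy r a with h | h | h
        · have := hg r hrR a hain h; omega
        · exact absurd h hne
        · have := hb a hain; omega
      · rw [Finset.card_erase_of_mem hain, hc]
      · exact hg r (Finset.mem_of_mem_erase hr) r' (Finset.mem_of_mem_erase hr') hlt
    · intro R hR
      rw [mem_Gset] at hR
      obtain ⟨hb, hc, hg⟩ := hR
      have hna : a ∉ R := by
        intro hn
        have := hb a hn
        omega
      simp only [Finset.mem_filter, mem_Gset]
      refine ⟨⟨fun r hr => ?_, ?_, fun r hr r' hr' hlt => ?_⟩, Finset.mem_insert_self a R⟩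
      · rcases Finset.mem_insert.mp hr with h | h
        · omega
        · have := hb r h; omega
      · rw [Finset.card_insert_of_notMem hna, hc]; omega
      · rcases Finset.mem_insert.mp hr with h | h <;>
          rcases Finset.mem_insert.mp hr' with h' | h'
        · omega
        · have := hb r' h'; omega
        · have := hb r h; omega
        · exact hg r h r' h' hlt
    · intro R hR
      simp only [Finset.mem_filter] at hR
      exact Finset.insert_erase hR.2
    · intro R hR
      rw [mem_Gset] at hR
      have hna : a ∉ R := by
        intro hn; have := hR.1 a hn; omega
      exact Finset.erase_insert hna
  have hsplit := Finset.card_filter_add_card_filter_not (s := Gset k m t)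
    (fun R => a ∈ R)
  beta_reduce at hsplit
  rw [h1] at hsplit
  unfold G at *
  omega

lemma D_G {k : ℕ} (hk : 2 ≤ k) (t : ℕ) : ∀ j, j ≤ t → ∀ x, j * k ≤ x →
    D j (fun m => (G k m t : ℤ)) x = (G k (x - j*k) (t - j) : ℤ) := by
  intro j
  induction j with
  | zero => intro _ x _; simp [D]
  | succ j ih =>
    intro hjt x hx
    rw [add_mul, one_mul] at hx ⊢
    have e : D (j+1) (fun m => (G k m t : ℤ)) x
        = D j (fun m => (G k m t : ℤ)) x - D j (fun m => (G k m t : ℤ)) (x-1) := rfl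
    rw [e, ih (by omega) x (by omega), ih (by omega) (x-1) (by omega)]
    have hrec := G_rec (k := k) (m := x - j*k) (t := t - j) (by omega) (by omega) (by omega)
    have h1 : x - 1 - j*k = x - j*k - 1 := by omega
    have h2 : x - j*k - k = x - (j*k + k) := by omega
    have h3 : t - j - 1 = t - (j+1) := by omega
    rw [show x - (j*k+k) = x - (j*k+k) from rfl] at h2
    rw [h1, hrec, h2, h3]
    push_cast
    ring

lemma D_G_diag {k : ℕ} (hk : 2 ≤ k) (t x : ℕ) (hx : t * k ≤ x) :
    D t (fun m => (G k m t : ℤ)) x = 1 := by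
  rw [D_G hk t t le_rfl x hx]
  simp [G_zero]

lemma D_G_vanish {k : ℕ} (hk : 2 ≤ k) (t j x : ℕ) (hx : t * k + j + 1 ≤ x) :
    D (t + j + 1) (fun m => (G k m t : ℤ)) x = 0 := by
  exact D_vanish t _ (t*k) 1 (fun y hy => D_G_diag hk t y hy) j x hx

lemma mem_Tset {k n m s : ℕ} {A : Finset (ℕ × ℕ)} :
    A ∈ Tset k n m s ↔
      (∀ p ∈ A, 1 ≤ p.1 ∧ p.1 ≤ n ∧ 1 ≤ p.2 ∧ p.2 + k ≤ m + 1) ∧ A.card = s ∧ gapOK k A := by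
  simp only [Tset, Finset.mem_filter, Finset.mem_powersetCard]
  constructor
  · rintro ⟨⟨hsub, hcard⟩, hgap⟩
    refine ⟨fun p hp => ?_, hcard, hgap⟩
    have := hsub hp
    simp only [Finset.mem_product, Finset.mem_Icc] at this
    omega
  · rintro ⟨hb, hcard, hgap⟩
    refine ⟨⟨fun p hp => ?_, hcard⟩, hgap⟩
    have := hb p hp
    simp only [Finset.mem_product, Finset.mem_Icc]
    omega

lemma B_zero (k m s : ℕ) : B k 0 m s = if s = 0 then 1 else 0 := by
  have h : Tset k 0 m s = if s = 0 then {∅} else ∅ := by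
    ext A
    simp only [mem_Tset]
    split
    · next hs =>
      subst hs
      simp only [Finset.mem_singleton, Finset.card_eq_zero]
      constructor
      · rintro ⟨-, h, -⟩; exact h
      · rintro rfl
        refine ⟨by simp, rfl, ?_⟩
        intro p hp; simp at hp
    · next hs =>
      simp only [Finset.notMem_empty, iff_false]
      rintro ⟨hb, hcard, -⟩
      have : A.Nonempty := by rw [← Finset.card_pos, hcard]; omega
      obtain ⟨p, hp⟩ := this
      have := hb p hp
      omega
  rw [B, h]
  split <;> simp

lemma B_split (k n m s : ℕ) :
    B k (n+1) m s = ∑ t ∈ Finset.range (s+1), G k m t * B k n m (s - t) := by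
  classical
  have hcard : ∑ t ∈ Finset.range (s+1), G k m t * B k n m (s - t)
      = ((Finset.range (s+1)).sigma (fun t => Gset k m t ×ˢ Tset k n m (s - t))).card := by
    rw [Finset.card_sigma]
    exact Finset.sum_congr rfl fun t _ => (Finset.card_product _ _).symm
  rw [B, hcard]
  symm
  refine Finset.card_bij' (fun x _ => x.2.2 ∪ (x.2.1.image (fun r => (n+1, r))))
    (fun A _ => ⟨((A.filter (fun p => p.1 = n+1)).image Prod.snd).card,
      ((A.filter (fun p => p.1 = n+1)).image Prod.snd,
       A.filter (fun p => ¬ p.1 = n+1))⟩) ?_ ?_ ?_ ?_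
  · -- forward maps into Tset k (n+1) m s
    rintro ⟨t, R, A⟩ hx
    simp only [Finset.mem_sigma, Finset.mem_product, Finset.mem_range] at hx
    obtain ⟨hts, hR, hA⟩ := hx
    rw [mem_Gset] at hR
    rw [mem_Tset] at hA ⊢
    obtain ⟨hRb, hRc, hRg⟩ := hR
    obtain ⟨hAb, hAc, hAg⟩ := hA
    have hdisj : Disjoint A (R.image (fun r => (n+1, r))) := by
      rw [Finset.disjoint_right]
      intro p hp hpA
      simp only [Finset.mem_image] at hp
      obtain ⟨r, -, rfl⟩ := hp
      have := hAb _ hpA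
      simp only at this
      omega
    constructor
    · intro p hp
      rcases Finset.mem_union.mp hp with h | h
      · have := hAb p h; omega
      · simp only [Finset.mem_image] at h
        obtain ⟨r, hr, rfl⟩ := h
        have := hRb r hr
        simp; omega
    constructor
    · rw [Finset.card_union_of_disjoint hdisj, hAc,
        Finset.card_image_of_injective _ (fun a b h => by simpa using h), hRc]
      omega
    · intro p hp q hq hfst hlt
      rcases Finset.mem_union.mp hp with h | h <;> rcases Finset.mem_union.mp hq with h' | h'
      · exact hAg p h q h' hfst hlt
      · exfalso
        simp only [Finset.mem_image] at h'
        obtain ⟨r, -, rfl⟩ := h'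
        have := hAb p h
        omega
      · exfalso
        simp only [Finset.mem_image] at h
        obtain ⟨r, -, rfl⟩ := h
        have := hAb q h'
        omega
      · simp only [Finset.mem_image] at h h'
        obtain ⟨r, hr, rfl⟩ := h
        obtain ⟨r', hr', rfl⟩ := h'
        exact hRg r hr r' hr' hlt
  · -- backward maps into sigma
    intro A hA
    rw [mem_Tset] at hA
    obtain ⟨hAb, hAc, hAg⟩ := hA
    simp only [Finset.mem_sigma, Finset.mem_product, Finset.mem_range]
    have hsnd_inj : Set.InjOn Prod.snd
        ((A.filter (fun p => p.1 = n+1) : Finset (ℕ × ℕ)) : Set (ℕ × ℕ)) := by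
      intro p hp q hq h
      simp only [Finset.coe_filter, Set.mem_setOf_eq] at hp hq
      exact Prod.ext (hp.2.trans hq.2.symm) h
    have hcard_img : ((A.filter (fun p => p.1 = n+1)).image Prod.snd).card
        = (A.filter (fun p => p.1 = n+1)).card := Finset.card_image_of_injOn hsnd_inj
    refine ⟨?_, ?_, ?_⟩
    · rw [hcard_img]
      calc (A.filter (fun p => p.1 = n+1)).card ≤ A.card := Finset.card_filter_le _ _
        _ < s + 1 := by omega
    · rw [mem_Gset]
      refine ⟨?_, rfl, ?_⟩
      · intro r hr
        simp only [Finset.mem_image, Finset.mem_filter] at hr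
        obtain ⟨p, ⟨hpA, -⟩, rfl⟩ := hr
        have := hAb p hpA
        omega
      · intro r hr r' hr' hlt
        simp only [Finset.mem_image, Finset.mem_filter] at hr hr'
        obtain ⟨p, ⟨hpA, hp1⟩, rfl⟩ := hr
        obtain ⟨q, ⟨hqA, hq1⟩, rfl⟩ := hr'
        exact hAg p hpA q hqA (hp1.trans hq1.symm) hlt
    · rw [mem_Tset]
      refine ⟨?_, ?_, ?_⟩
      · intro p hp
        simp only [Finset.mem_filter] at hp
        have := hAb p hp.1
        have := hp.2
        omega
      · rw [hcard_img]
        have := Finset.card_filter_add_card_filter_not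
          (s := A) (fun p => p.1 = n+1)
        omega
      · intro p hp q hq
        simp only [Finset.mem_filter] at hp hq
        exact hAg p hp.1 q hq.1
  · -- left inverse
    rintro ⟨t, R, A⟩ hx
    simp only [Finset.mem_sigma, Finset.mem_product, Finset.mem_range] at hx
    obtain ⟨hts, hR, hA⟩ := hx
    rw [mem_Gset] at hR
    rw [mem_Tset] at hA
    have hfilter1 : (A ∪ R.image (fun r => (n+1, r))).filter (fun p => p.1 = n+1)
        = R.image (fun r => (n+1, r)) := by
      rw [Finset.filter_union]
      have h1 : A.filter (fun p => p.1 = n+1) = ∅ := by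
        rw [Finset.filter_eq_empty_iff]
        intro p hp
        have := hA.1 p hp
        omega
      have h2 : (R.image (fun r => (n+1, r))).filter (fun p => p.1 = n+1)
          = R.image (fun r => (n+1, r)) := by
        rw [Finset.filter_eq_self]
        intro p hp
        simp only [Finset.mem_image] at hp
        obtain ⟨r, -, rfl⟩ := hp
        rfl
      rw [h1, h2, Finset.empty_union]
    have hfilter2 : (A ∪ R.image (fun r => (n+1, r))).filter (fun p => ¬ p.1 = n+1) = A := by
      rw [Finset.filter_union]
      have h1 : A.filter (fun p => ¬ p.1 = n+1) = A := by
        rw [Finset.filter_eq_self]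
        intro p hp
        have := hA.1 p hp
        omega
      have h2 : (R.image (fun r => (n+1, r))).filter (fun p => ¬ p.1 = n+1) = ∅ := by
        rw [Finset.filter_eq_empty_iff]
        intro p hp
        simp only [Finset.mem_image] at hp
        obtain ⟨r, -, rfl⟩ := hp
        simp
      rw [h1, h2, Finset.union_empty]
    have himg : (R.image (fun r => (n+1, r))).image Prod.snd = R := by
      rw [Finset.image_image]
      simp
    have hcardR : ((A ∪ R.image (fun r => (n+1, r))).filter
        (fun p => p.1 = n+1) |>.image Prod.snd).card = t := by
      rw [hfilter1, himg, hR.2.1]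
    refine Sigma.ext ?_ ?_
    · simpa using hcardR
    · simp only
      rw [hfilter1, himg, hfilter2]
  · -- right inverse
    intro A hA
    simp only
    ext p
    simp only [Finset.mem_union, Finset.mem_filter, Finset.mem_image]
    constructor
    · rintro (⟨hp, -⟩ | ⟨r, ⟨q, ⟨hqA, hq1⟩, rfl⟩, rfl⟩)
      · exact hp
      · rwa [show ((n+1 : ℕ), q.2) = q from Prod.ext hq1.symm rfl]
    · intro hp
      by_cases h : p.1 = n+1
      · right
        exact ⟨p.2, ⟨p, ⟨hp, h⟩, rfl⟩, Prod.ext h.symm rfl⟩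
      · left; exact ⟨hp, h⟩

lemma D_B {k : ℕ} (hk : 2 ≤ k) : ∀ n s x, k * s ≤ x →
    D s (fun m => (B k n m s : ℤ)) x = (n : ℤ)^s := by
  intro n
  induction n with
  | zero =>
    intro s x hx
    cases s with
    | zero => simp [D, B_zero]
    | succ s =>
      have hz : (fun m => (B k 0 m (s+1) : ℤ)) = fun _ => (0:ℤ) := by
        funext m; rw [B_zero]; simp
      rw [hz, D_const]
      simp
  | succ n ih =>
    intro s x hx
    have hsplit : (fun m => (B k (n+1) m s : ℤ))
        = fun m => ∑ t ∈ Finset.range (s+1), (G k m t : ℤ) * (B k n m (s - t) : ℤ) := by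
      funext m; rw [B_split]; push_cast; ring
    rw [hsplit, D_sum]
    have hterm : ∀ t ∈ Finset.range (s+1),
        D s (fun m => (G k m t : ℤ) * (B k n m (s-t) : ℤ)) x
          = (s.choose t : ℤ) * (n:ℤ)^(s-t) := by
      intro t ht
      simp only [Finset.mem_range] at ht
      have e3 : k*(s-t) + k*t = k*s := by rw [← Nat.mul_add]; congr 1; omega
      have e4 : s-t ≤ k*(s-t) := Nat.le_mul_of_pos_left _ (by omega)
      have e5 : t ≤ k*t := Nat.le_mul_of_pos_left _ (by omega)
      have e6 : t*k = k*t := Nat.mul_comm t k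
      rw [D_leibniz]
      rw [Finset.sum_eq_single t]
      · rw [D_G_diag hk t (x - (s - t)) (by omega), ih (s-t) x (by omega)]
        ring
      · intro j hj hne
        simp only [Finset.mem_range] at hj
        rcases lt_or_gt_of_ne hne with hlt | hgt
        · have hz : D (s-j) (fun m => (B k n m (s-t) : ℤ)) x = 0 := by
            have hv := D_vanish (s-t) _ (k*(s-t)) ((n:ℤ)^(s-t))
              (fun y hy => ih (s-t) y hy) (t-j-1) x (by omega)
            rw [show (s-t) + (t-j-1) + 1 = s - j by omega] at hv
            exact hv
          rw [hz]; ring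
        · have hz : D j (fun m => (G k m t : ℤ)) (x - (s-j)) = 0 := by
            have hv := D_G_vanish hk t (j - t - 1) (x - (s-j)) (by omega)
            rw [show t + (j-t-1) + 1 = j by omega] at hv
            exact hv
          rw [hz]; ring
      · intro h; exact absurd (Finset.mem_range.mpr (by omega)) h
    rw [Finset.sum_congr rfl hterm]
    have hbin := add_pow (1 : ℤ) (n : ℤ) s
    push_cast
    rw [show ((n:ℤ) + 1)^s = ((1:ℤ) + n)^s by ring, hbin]
    apply Finset.sum_congr rfl
    intro t _
    ring
def anchor (k : ℕ) (p : Finset (ℕ × ℕ)) : ℕ × ℕ :=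
  (p.sup Prod.fst, p.sup Prod.snd + 1 - k)

def toKmer (k : ℕ) (q : ℕ × ℕ) : Finset (ℕ × ℕ) := vertKmer k q.1 q.2

lemma mem_vertKmer {k c r : ℕ} {q : ℕ × ℕ} :
    q ∈ vertKmer k c r ↔ q.1 = c ∧ r ≤ q.2 ∧ q.2 < r + k := by
  simp only [vertKmer, Finset.mem_image, Finset.mem_range]
  constructor
  · rintro ⟨i, hi, rfl⟩; exact ⟨rfl, by omega, by omega⟩
  · rintro ⟨h1, h2, h3⟩
    exact ⟨q.2 - r, by omega, by rw [← h1]; ext <;> simp <;> omega⟩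

lemma anchor_vert {k : ℕ} (hk : 1 ≤ k) (c r : ℕ) :
    anchor k (vertKmer k c r) = (c, r) := by
  have hne : (Finset.range k).Nonempty := by
    rw [Finset.nonempty_range_iff]; omega
  unfold anchor vertKmer
  rw [Finset.sup_image, Finset.sup_image]
  have h1 : (Finset.range k).sup ((Prod.fst ∘ fun i => ((c, r + i) : ℕ × ℕ))) = c := by
    rw [show (Prod.fst ∘ fun i => ((c, r + i) : ℕ × ℕ)) = fun _ => c from rfl]
    exact Finset.sup_const hne c
  have h2 : (Finset.range k).sup ((Prod.snd ∘ fun i => ((c, r + i) : ℕ × ℕ))) = r + k - 1 := by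
    rw [show (Prod.snd ∘ fun i => ((c, r + i) : ℕ × ℕ)) = fun i => r + i from rfl]
    apply le_antisymm
    · apply Finset.sup_le
      intro i hi
      simp only [Finset.mem_range] at hi
      omega
    · have hmem : k - 1 ∈ Finset.range k := by simp; omega
      have hle := Finset.le_sup (f := fun i => r + i) hmem
      have hle' : r + (k - 1) ≤ (Finset.range k).sup (fun i => r + i) := hle
      omega
  rw [h1, h2]
  ext <;> simp <;> omega

lemma toKmer_anchor {k : ℕ} (hk : 1 ≤ k) {p : Finset (ℕ × ℕ)} {c r : ℕ}
    (hp : p = vertKmer k c r) : toKmer k (anchor k p) = p ∧ anchor k p = (c, r) := by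
  subst hp
  rw [anchor_vert hk]
  exact ⟨rfl, rfl⟩

lemma horiz_card_lt {k n c r : ℕ} (hn : 1 ≤ n) (hnk : n < k) :
    (cylHorizKmer k n c r).card < k := by
  have hsub : cylHorizKmer k n c r ⊆ (Finset.range n).image (fun j => (j + 1, r)) := by
    intro q hq
    simp only [cylHorizKmer, Finset.mem_image, Finset.mem_range] at hq ⊢
    obtain ⟨i, -, rfl⟩ := hq
    exact ⟨(c + i - 1) % n, Nat.mod_lt _ (by omega), rfl⟩
  calc (cylHorizKmer k n c r).card ≤ _ := Finset.card_le_card hsub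
    _ ≤ (Finset.range n).card := Finset.card_image_le
    _ = n := Finset.card_range n
    _ < k := hnk

lemma vert_disjoint {k c r c' r' : ℕ} (h : c ≠ c' ∨ r + k ≤ r' ∨ r' + k ≤ r) :
    Disjoint (vertKmer k c r) (vertKmer k c' r') := by
  rw [Finset.disjoint_left]
  intro q hq hq'
  rw [mem_vertKmer] at hq hq'
  rcases h with h | h | h <;> omega

lemma vert_disjoint_gap {k c r r' : ℕ} (hk : 1 ≤ k)
    (h : Disjoint (vertKmer k c r) (vertKmer k c r')) (hlt : r < r') : r + k ≤ r' := by
  by_contra hcon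
  rw [Finset.disjoint_left] at h
  have h1 : ((c, r') : ℕ × ℕ) ∈ vertKmer k c r := by
    rw [mem_vertKmer]; exact ⟨rfl, by omega, by omega⟩
  have h2 : ((c, r') : ℕ × ℕ) ∈ vertKmer k c r' := by
    rw [mem_vertKmer]; exact ⟨rfl, by omega, by omega⟩
  exact h h1 h2

lemma config_set_eq {k n m s : ℕ} (hk : 1 ≤ k) (hn : 1 ≤ n) (hnk : n < k) :
    {C | IsCylConfig k n m s C}
      = ↑((Tset k n m s).image (fun A => A.image (toKmer k))) := by
  ext C
  simp only [Set.mem_setOf_eq, Finset.coe_image, Set.mem_image, Finset.mem_coe]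
  constructor
  · rintro ⟨hcard, hplace, hpair⟩
    -- all placements vertical
    have hvert : ∀ p ∈ C, ∃ c r, 1 ≤ c ∧ c ≤ n ∧ 1 ≤ r ∧ r + k ≤ m + 1 ∧
        p = vertKmer k c r := by
      intro p hp
      rcases hplace p hp with ⟨c, r, -, -, -, -, hpe, hpc⟩ | h
      · exfalso
        rw [hpe] at hpc
        have := horiz_card_lt (c := c) (r := r) hn hnk
        omega
      · exact h
    refine ⟨C.image (anchor k), ?_, ?_⟩
    · rw [mem_Tset]
      have hanchor_mem : ∀ q ∈ C.image (anchor k),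
          1 ≤ q.1 ∧ q.1 ≤ n ∧ 1 ≤ q.2 ∧ q.2 + k ≤ m + 1 := by
        intro q hq
        simp only [Finset.mem_image] at hq
        obtain ⟨p, hp, rfl⟩ := hq
        obtain ⟨c, r, h1, h2, h3, h4, hpe⟩ := hvert p hp
        rw [(toKmer_anchor hk hpe).2]
        exact ⟨h1, h2, h3, h4⟩
      refine ⟨hanchor_mem, ?_, ?_⟩
      · rw [Finset.card_image_of_injOn, hcard]
        intro p hp q hq he
        obtain ⟨c, r, -, -, -, -, hpe⟩ := hvert p hp
        obtain ⟨c', r', -, -, -, -, hqe⟩ := hvert q hq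
        rw [← (toKmer_anchor hk hpe).1, ← (toKmer_anchor hk hqe).1, he]
      · intro a ha b hb hab hlt
        simp only [Finset.mem_image] at ha hb
        obtain ⟨p, hp, rfl⟩ := ha
        obtain ⟨q, hq, rfl⟩ := hb
        obtain ⟨c, r, -, -, -, -, hpe⟩ := hvert p hp
        obtain ⟨c', r', -, -, -, -, hqe⟩ := hvert q hq
        obtain ⟨hpk, hpa⟩ := toKmer_anchor hk hpe
        obtain ⟨hqk, hqa⟩ := toKmer_anchor hk hqe
        have hpq : p ≠ q := by
          intro he
          have hcc : (c, r) = (c', r') := by rw [← hpa, ← hqa, he]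
          rw [hpa, hqa] at hlt
          simp only at hlt
          rw [Prod.ext_iff] at hcc
          simp only at hcc
          omega
        have hdisj := hpair hp hq hpq
        rw [hpa, hqa] at hab hlt ⊢
        rw [hpe, hqe] at hdisj
        simp only at hab hlt ⊢
        subst hab
        exact vert_disjoint_gap hk hdisj hlt
    · -- image back
      rw [Finset.image_image]
      apply Finset.image_congr (g := id) ?_ |>.trans (Finset.image_id)
      intro p hp
      simp only [Function.comp_apply, id_eq]
      obtain ⟨c, r, -, -, -, -, hpe⟩ := hvert p hp
      exact (toKmer_anchor hk hpe).1
  · rintro ⟨A, hA, rfl⟩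
    rw [mem_Tset] at hA
    obtain ⟨hb, hcard, hgap⟩ := hA
    have hinj : Set.InjOn (toKmer k) ↑A := by
      intro a _ b _ he
      have h1 := anchor_vert hk a.1 a.2
      have h2 := anchor_vert hk b.1 b.2
      have : anchor k (toKmer k a) = anchor k (toKmer k b) := by rw [he]
      unfold toKmer at this
      rw [h1, h2] at this
      exact Prod.ext (congrArg Prod.fst this) (congrArg Prod.snd this)
    refine ⟨?_, ?_, ?_⟩
    · rw [Finset.card_image_of_injOn hinj, hcard]
    · intro p hp
      simp only [Finset.mem_image] at hp
      obtain ⟨a, ha, rfl⟩ := hp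
      right
      obtain ⟨h1, h2, h3, h4⟩ := hb a ha
      exact ⟨a.1, a.2, h1, h2, h3, h4, rfl⟩
    · intro p hp q hq hpq
      simp only [Finset.coe_image, Set.mem_image, Finset.mem_coe] at hp hq
      obtain ⟨a, ha, rfl⟩ := hp
      obtain ⟨b, hb', rfl⟩ := hq
      have hab : a ≠ b := fun h => hpq (by rw [h])
      apply vert_disjoint
      by_cases hc : a.1 = b.1
      · rcases Nat.lt_trichotomy a.2 b.2 with h | h | h
        · right; left; exact hgap a ha b hb' hc h
        · exact absurd (Prod.ext hc h) hab
        · right; right; exact hgap b hb' a ha hc.symm h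
      · left; exact hc

lemma cylCount_eq_B {k n m s : ℕ} (hk : 1 ≤ k) (hn : 1 ≤ n) (hnk : n < k) :
    cylCount k n m s = B k n m s := by
  rw [cylCount, config_set_eq hk hn hnk, Set.ncard_coe_finset, B]
  apply Finset.card_image_of_injOn
  intro A hA A' hA' he
  rw [Finset.mem_coe, mem_Tset] at hA hA'
  have recover : ∀ X : Finset (ℕ × ℕ),
      (∀ p ∈ X, 1 ≤ p.1 ∧ p.1 ≤ n ∧ 1 ≤ p.2 ∧ p.2 + k ≤ m + 1) →
      (X.image (toKmer k)).image (anchor k) = X := by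
    intro X hX
    rw [Finset.image_image]
    apply Finset.image_congr (g := id) ?_ |>.trans (Finset.image_id)
    intro a _
    simp only [Function.comp_apply, id_eq]
    exact anchor_vert hk a.1 a.2
  rw [← recover A hA.1, ← recover A' hA'.1]
  exact congrArg (Finset.image (anchor k)) he


end CylAux

set_option maxHeartbeats 1000000 in
/-- Recurrence for `k`-mer coverings, cylinder boundary, `n < k` (all `k`-mers vertical):
`∑_{i=0}^{s} (-1)^i C(s,i) b(m-i, s) = n^s` for `m ≥ k s`. -/
theorem cyl_recurrence_narrow (k n s : ℕ) (hk : 2 ≤ k) (hn1 : 1 ≤ n) (hnk : n < k)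
    (hs : 1 ≤ s) (m : ℕ) (hm : k * s ≤ m) :
    ∑ i ∈ Finset.range (s + 1),
        (-1 : ℤ) ^ i * (s.choose i : ℤ) * (cylCount k n (m - i) s : ℤ) =
      (n : ℤ) ^ s := by
  have hDB := CylAux.D_B hk n s m hm
  rw [CylAux.D_closed] at hDB
  rw [← hDB]
  refine Finset.sum_congr rfl fun i _ => ?_
  rw [CylAux.cylCount_eq_B (show 1 ≤ k by omega) hn1 hnk]
end

section
/- For all integers m ≥ ks + 1, the numbers a(m, s) satisfy the homogeneous recurrence ∑_{i=0}^{s+1} (−1)^i · C(s+1, i) · a(m−i, s) = 0, where C(s+1, i) denotes the binomial coefficient. -/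
/-! ### Auxiliary development -/

open Finset

attribute [local instance] Classical.propDecidable

namespace FreeRec

/-- The `n × m` grid of sites. -/
def grid (n m : ℕ) : Finset (ℕ × ℕ) := Finset.Icc 1 n ×ˢ Finset.Icc 1 m

/-- The finset of all configurations. -/
noncomputable def configs (k n m s : ℕ) : Finset (Finset (Finset (ℕ × ℕ))) :=
  ((grid n m).powerset.powerset).filter fun C => IsFreeConfig k n m s C

/-- The set of occupied rows of a configuration. -/
def rws (C : Finset (Finset (ℕ × ℕ))) : Finset ℕ := C.sup fun p => p.image Prod.snd

/-- Number of occupied rows. -/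
def nrows (C : Finset (Finset (ℕ × ℕ))) : ℕ := (rws C).card

/-- Rank of a row: the number of occupied rows `≤ r`. -/
noncomputable def rk (C : Finset (Finset (ℕ × ℕ))) (r : ℕ) : ℕ :=
  ((rws C).filter (· ≤ r)).card

/-- Map on sites induced by a map on rows. -/
def siteMap (f : ℕ → ℕ) (q : ℕ × ℕ) : ℕ × ℕ := (q.1, f q.2)

/-- Map on configurations induced by a map on rows. -/
def cfgMap (f : ℕ → ℕ) (C : Finset (Finset (ℕ × ℕ))) : Finset (Finset (ℕ × ℕ)) :=
  C.image fun p => p.image (siteMap f)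

/-- The reduction of a configuration: delete all empty rows. -/
noncomputable def reduce (C : Finset (Finset (ℕ × ℕ))) : Finset (Finset (ℕ × ℕ)) :=
  cfgMap (rk C) C

/-- A placement spans the horizontal cut between rows `t` and `t+1`. -/
def spans (p : Finset (ℕ × ℕ)) (t : ℕ) : Prop :=
  (∃ q ∈ p, q.2 ≤ t) ∧ (∃ q ∈ p, t < q.2)

/-- Valid cuts of a configuration. -/
noncomputable def cuts (C : Finset (Finset (ℕ × ℕ))) : Finset ℕ :=
  (Finset.range (nrows C + 1)).filter fun t => ∀ p ∈ C, ¬ spans p t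

/-- A configuration is reduced if its occupied rows are exactly `1, ..., nrows`. -/
def Reduced (C : Finset (Finset (ℕ × ℕ))) : Prop :=
  rws C = Finset.Icc 1 (nrows C)

/-- The finset of reduced configurations. -/
noncomputable def Red (k n s : ℕ) : Finset (Finset (Finset (ℕ × ℕ))) :=
  (configs k n (k * s) s).filter Reduced

/-- Expansion map on rows determined by numbers of empty rows inserted at each cut. -/
noncomputable def sig (C₀ : Finset (Finset (ℕ × ℕ))) (e : ℕ → ℕ) (r : ℕ) : ℕ :=
  r + ∑ t ∈ (cuts C₀).filter (· < r), e t

variable {k n m m' s : ℕ} {p : Finset (ℕ × ℕ)} {C C₀ : Finset (Finset (ℕ × ℕ))}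

/-- rows of a placement form an interval `Icc a b` with controlled size. -/
lemma placement_rows (hk : 1 ≤ k) (hp : IsFreePlacement k n m p) :
    ∃ a b, 1 ≤ a ∧ a ≤ b ∧ b ≤ m ∧ b ≤ a + (k - 1) ∧ p.image Prod.snd = Finset.Icc a b := by
  rcases hp with ⟨c, r, hc1, hcn, hr1, hrm, rfl⟩ | ⟨c, r, hc1, hcn, hr1, hrm, rfl⟩
  · refine ⟨r, r, hr1, le_refl _, hrm, Nat.le_add_right _ _, ?_⟩
    ext x
    simp only [horizKmer, Finset.image_image, Finset.mem_image, Finset.mem_range,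
      Function.comp_apply, Finset.mem_Icc]
    constructor
    · rintro ⟨i, hi, rfl⟩; omega
    · rintro ⟨h1, h2⟩; exact ⟨0, by omega, by omega⟩
  · refine ⟨r, r + (k - 1), hr1, Nat.le_add_right _ _, by omega, le_refl _, ?_⟩
    ext x
    simp only [vertKmer, Finset.image_image, Finset.mem_image, Finset.mem_range,
      Function.comp_apply, Finset.mem_Icc]
    constructor
    · rintro ⟨i, hi, rfl⟩; omega
    · rintro ⟨h1, h2⟩; exact ⟨x - r, by omega, by omega⟩

lemma placement_subset_grid (hp : IsFreePlacement k n m p) : p ⊆ grid n m := by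
  rcases hp with ⟨c, r, hc1, hcn, hr1, hrm, rfl⟩ | ⟨c, r, hc1, hcn, hr1, hrm, rfl⟩ <;>
    intro q hq <;>
    simp only [horizKmer, vertKmer, Finset.mem_image, Finset.mem_range] at hq <;>
    obtain ⟨i, hi, rfl⟩ := hq <;>
    simp only [grid, Finset.mem_product, Finset.mem_Icc] <;> omega

lemma placement_nonempty (hk : 1 ≤ k) (hp : IsFreePlacement k n m p) : p.Nonempty := by
  rcases hp with ⟨c, r, hc1, hcn, hr1, hrm, rfl⟩ | ⟨c, r, hc1, hcn, hr1, hrm, rfl⟩ <;>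
    exact ⟨_, Finset.mem_image.2 ⟨0, Finset.mem_range.2 (by omega), rfl⟩⟩

lemma mem_rws {r : ℕ} : r ∈ rws C ↔ ∃ p ∈ C, r ∈ p.image Prod.snd := by
  simp [rws, Finset.mem_sup]

lemma rows_subset_rws (hp : p ∈ C) : p.image Prod.snd ⊆ rws C :=
  fun _ hx => mem_rws.2 ⟨p, hp, hx⟩

lemma placement_map (hk : 1 ≤ k) (hp : IsFreePlacement k n m p) (f : ℕ → ℕ)
    (hshift : ∀ r ∈ p.image Prod.snd, ∀ r' ∈ p.image Prod.snd, r ≤ r' →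
      f r' = f r + (r' - r))
    (hlow : ∀ r ∈ p.image Prod.snd, 1 ≤ f r) (hhigh : ∀ r ∈ p.image Prod.snd, f r ≤ m') :
    IsFreePlacement k n m' (p.image (siteMap f)) := by
  rcases hp with ⟨c, r, hc1, hcn, hr1, hrm, rfl⟩ | ⟨c, r, hc1, hcn, hr1, hrm, rfl⟩
  · have hr : r ∈ (horizKmer k c r).image Prod.snd :=
      Finset.mem_image.2 ⟨(c, r), Finset.mem_image.2 ⟨0, Finset.mem_range.2 (by omega),
        by simp⟩, rfl⟩
    left
    refine ⟨c, f r, hc1, hcn, hlow r hr, hhigh r hr, ?_⟩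
    rw [horizKmer, horizKmer, Finset.image_image]
    rfl
  · have hmem : ∀ i, i < k → r + i ∈ (vertKmer k c r).image Prod.snd := fun i hi =>
      Finset.mem_image.2 ⟨(c, r + i), Finset.mem_image.2 ⟨i, Finset.mem_range.2 hi, rfl⟩, rfl⟩
    have h0 : r ∈ (vertKmer k c r).image Prod.snd := by simpa using hmem 0 (by omega)
    right
    refine ⟨c, f r, hc1, hcn, hlow r h0, ?_, ?_⟩
    · have h1 := hshift r h0 (r + (k - 1)) (hmem _ (by omega)) (by omega)
      have h2 := hhigh _ (hmem (k - 1) (by omega))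
      omega
    · rw [vertKmer, vertKmer, Finset.image_image]
      refine Finset.image_congr ?_
      intro i hi
      have h1 := hshift r h0 (r + i) (hmem i (Finset.mem_range.1 hi)) (by omega)
      simp only [Function.comp_apply, siteMap]
      rw [h1]
      simp

lemma config_map (hk : 1 ≤ k) (hC : IsFreeConfig k n m s C) (f : ℕ → ℕ)
    (hinj : ∀ r ∈ rws C, ∀ r' ∈ rws C, f r = f r' → r = r')
    (hshift : ∀ p ∈ C, ∀ r ∈ p.image Prod.snd, ∀ r' ∈ p.image Prod.snd, r ≤ r' →
      f r' = f r + (r' - r))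
    (hlow : ∀ r ∈ rws C, 1 ≤ f r) (hhigh : ∀ r ∈ rws C, f r ≤ m') :
    IsFreeConfig k n m' s (cfgMap f C) := by
  obtain ⟨hcard, hplace, hdisj⟩ := hC
  have hdisj' : ∀ p ∈ C, ∀ p' ∈ C, p ≠ p' →
      Disjoint (p.image (siteMap f)) (p'.image (siteMap f)) := by
    intro p hp p' hp' hne
    rw [Finset.disjoint_left]
    rintro q hq hq'
    obtain ⟨⟨c1, r1⟩, h1, rfl⟩ := Finset.mem_image.1 hq
    obtain ⟨⟨c2, r2⟩, h2, heq⟩ := Finset.mem_image.1 hq'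
    have hc : c2 = c1 := congrArg Prod.fst heq
    have hr : f r2 = f r1 := congrArg Prod.snd heq
    have hr12 : r2 = r1 :=
      hinj _ (rows_subset_rws hp' (Finset.mem_image.2 ⟨_, h2, rfl⟩)) _
        (rows_subset_rws hp (Finset.mem_image.2 ⟨_, h1, rfl⟩)) hr
    subst hc; subst hr12
    exact Finset.disjoint_left.1 (hdisj hp hp' hne) h1 h2
  refine ⟨?_, ?_, ?_⟩
  · rw [cfgMap, Finset.card_image_of_injOn, hcard]
    intro p hp p' hp' heq
    by_contra hne
    have heq' : p.image (siteMap f) = p'.image (siteMap f) := heq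
    have h1 := hdisj' p hp p' hp' hne
    rw [heq'] at h1
    have hne1 : (p'.image (siteMap f)).Nonempty :=
      ((placement_nonempty hk (hplace p' hp')).image _)
    exact hne1.ne_empty (disjoint_self.1 h1)
  · intro P hP
    obtain ⟨p, hp, rfl⟩ := Finset.mem_image.1 hP
    exact placement_map hk (hplace p hp) f (hshift p hp)
      (fun r hr => hlow r (rows_subset_rws hp hr))
      (fun r hr => hhigh r (rows_subset_rws hp hr))
  · intro P hP Q hQ hne
    obtain ⟨p, hp, rfl⟩ := Finset.mem_image.1 (Finset.mem_coe.1 hP)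
    obtain ⟨p', hp', rfl⟩ := Finset.mem_image.1 (Finset.mem_coe.1 hQ)
    exact hdisj' p hp p' hp' (fun h => hne (by rw [h]))

lemma rws_cfgMap (f : ℕ → ℕ) : rws (cfgMap f C) = (rws C).image f := by
  ext r
  rw [Finset.mem_image]
  simp only [mem_rws, cfgMap, Finset.mem_image]
  constructor
  · rintro ⟨P, ⟨p, hp, rfl⟩, hr⟩
    obtain ⟨q, hq, rfl⟩ := hr
    obtain ⟨q', hq', rfl⟩ := Finset.mem_image.1 hq
    exact ⟨q'.2, ⟨p, hp, q', hq', rfl⟩, rfl⟩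
  · rintro ⟨x, ⟨p, hp, q, hq, rfl⟩, rfl⟩
    exact ⟨p.image (siteMap f), ⟨p, hp, rfl⟩, siteMap f q, Finset.mem_image.2 ⟨q, hq, rfl⟩, rfl⟩

lemma mem_configs : C ∈ configs k n m s ↔ IsFreeConfig k n m s C := by
  rw [configs, Finset.mem_filter]
  constructor
  · exact fun h => h.2
  · intro h
    refine ⟨?_, h⟩
    rw [Finset.mem_powerset]
    intro pp hpp
    rw [Finset.mem_powerset]
    exact placement_subset_grid (h.2.1 pp hpp)

lemma rws_subset_Icc (hC : IsFreeConfig k n m s C) : rws C ⊆ Finset.Icc 1 m := by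
  intro r hr
  obtain ⟨pp, hp, hr⟩ := mem_rws.1 hr
  obtain ⟨q, hq, rfl⟩ := Finset.mem_image.1 hr
  have := placement_subset_grid (hC.2.1 pp hp) hq
  simp only [grid, Finset.mem_product, Finset.mem_Icc] at this ⊢
  exact this.2

lemma rk_mono {r r' : ℕ} (h : r ≤ r') : rk C r ≤ rk C r' := by
  apply Finset.card_le_card
  intro x hx
  rw [Finset.mem_filter] at hx ⊢
  exact ⟨hx.1, le_trans hx.2 h⟩

lemma rk_lt {r r' : ℕ} (hr' : r' ∈ rws C) (h : r < r') : rk C r < rk C r' := by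
  apply Finset.card_lt_card
  rw [Finset.ssubset_iff_of_subset]
  · exact ⟨r', Finset.mem_filter.2 ⟨hr', le_refl _⟩, fun hc => by
      have := (Finset.mem_filter.1 hc).2; omega⟩
  · intro x hx
    rw [Finset.mem_filter] at hx ⊢
    exact ⟨hx.1, by omega⟩

lemma rk_le_nrows {r : ℕ} : rk C r ≤ nrows C :=
  Finset.card_le_card (Finset.filter_subset _ _)

lemma rk_pos {r : ℕ} (hr : r ∈ rws C) : 1 ≤ rk C r :=
  Finset.card_pos.2 ⟨r, Finset.mem_filter.2 ⟨hr, le_refl _⟩⟩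

lemma rk_add {r r' : ℕ} (h : Finset.Icc r r' ⊆ rws C) (hrr : r ≤ r') :
    rk C r' = rk C r + (r' - r) := by
  have hsplit : (rws C).filter (· ≤ r') = (rws C).filter (· ≤ r) ∪ Finset.Icc (r + 1) r' := by
    ext x
    simp only [Finset.mem_filter, Finset.mem_union, Finset.mem_Icc]
    constructor
    · rintro ⟨hx, hxr'⟩
      by_cases hxr : x ≤ r
      · exact Or.inl ⟨hx, hxr⟩
      · exact Or.inr ⟨by omega, hxr'⟩
    · rintro (⟨hx, hxr⟩ | ⟨h1, h2⟩)
      · exact ⟨hx, by omega⟩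
      · exact ⟨h (Finset.mem_Icc.2 ⟨by omega, h2⟩), h2⟩
  rw [rk, rk, hsplit, Finset.card_union_of_disjoint, Nat.card_Icc]
  · omega
  · rw [Finset.disjoint_left]
    intro x hx hx2
    rw [Finset.mem_filter] at hx
    rw [Finset.mem_Icc] at hx2
    omega

lemma rk_injOn : ∀ r ∈ rws C, ∀ r' ∈ rws C, rk C r = rk C r' → r = r' := by
  intro r hr r' hr' heq
  rcases lt_trichotomy r r' with h | h | h
  · exact absurd heq (Nat.ne_of_lt (rk_lt hr' h))
  · exact h
  · exact absurd heq.symm (Nat.ne_of_lt (rk_lt hr h))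

lemma nrows_le (hk : 1 ≤ k) (hC : IsFreeConfig k n m s C) : nrows C ≤ k * s := by
  rw [nrows, rws, Finset.sup_eq_biUnion]
  calc (C.biUnion fun p => p.image Prod.snd).card
      ≤ ∑ p ∈ C, (p.image Prod.snd).card := Finset.card_biUnion_le
    _ ≤ ∑ p ∈ C, k := by
        apply Finset.sum_le_sum
        intro p hp
        obtain ⟨a, b, h1, h2, h3, h4, h5⟩ := placement_rows hk (hC.2.1 p hp)
        rw [h5, Nat.card_Icc]
        omega
    _ = k * s := by rw [Finset.sum_const, hC.1, smul_eq_mul]; ring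

lemma reduce_config (hk : 1 ≤ k) (hC : IsFreeConfig k n m s C) :
    IsFreeConfig k n (k * s) s (reduce C) := by
  apply config_map hk hC (rk C) rk_injOn
  · intro p hp r hr r' hr' hle
    obtain ⟨a, b, h1, h2, h3, h4, h5⟩ := placement_rows hk (hC.2.1 p hp)
    apply rk_add _ hle
    intro x hx
    apply rows_subset_rws hp
    rw [h5] at hr hr' ⊢
    rw [Finset.mem_Icc] at hr hr' hx ⊢
    omega
  · exact fun r hr => rk_pos hr
  · exact fun r hr => le_trans rk_le_nrows (nrows_le hk hC)

lemma rws_reduce (hC : IsFreeConfig k n m s C) :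
    rws (reduce C) = Finset.Icc 1 (nrows C) := by
  rw [reduce, rws_cfgMap]
  apply Finset.eq_of_subset_of_card_le
  · intro x hx
    obtain ⟨r, hr, rfl⟩ := Finset.mem_image.1 hx
    exact Finset.mem_Icc.2 ⟨rk_pos hr, rk_le_nrows⟩
  · rw [Nat.card_Icc, Finset.card_image_of_injOn (fun r hr r' hr' => rk_injOn r hr r' hr')]
    rw [nrows]
    omega

lemma nrows_reduce (hC : IsFreeConfig k n m s C) : nrows (reduce C) = nrows C := by
  rw [nrows, rws_reduce hC, Nat.card_Icc]
  omega

lemma reduced_reduce (hC : IsFreeConfig k n m s C) : Reduced (reduce C) := by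
  rw [Reduced, nrows_reduce hC, rws_reduce hC]

lemma reduce_mem_Red (hk : 1 ≤ k) (hC : C ∈ configs k n m s) : reduce C ∈ Red k n s :=
  Finset.mem_filter.2 ⟨mem_configs.2 (reduce_config hk (mem_configs.1 hC)),
    reduced_reduce (mem_configs.1 hC)⟩

lemma zero_mem_cuts (hC : IsFreeConfig k n m s C) : 0 ∈ cuts C := by
  rw [cuts, Finset.mem_filter]
  refine ⟨Finset.mem_range.2 (by omega), ?_⟩
  rintro p hp ⟨⟨q, hq, hq0⟩, -⟩
  have := placement_subset_grid (hC.2.1 p hp) hq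
  simp only [grid, Finset.mem_product, Finset.mem_Icc] at this
  omega

lemma nrows_mem_cuts (hred : Reduced C) : nrows C ∈ cuts C := by
  rw [cuts, Finset.mem_filter]
  refine ⟨Finset.mem_range.2 (by omega), ?_⟩
  rintro p hp ⟨-, ⟨q, hq, hq0⟩⟩
  have : q.2 ∈ rws C := rows_subset_rws hp (Finset.mem_image.2 ⟨q, hq, rfl⟩)
  rw [hred, Finset.mem_Icc] at this
  omega

lemma nrows_pos (hk : 1 ≤ k) (hs : 1 ≤ s) (hC : IsFreeConfig k n m s C) : 1 ≤ nrows C := by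
  have hC1 : 0 < C.card := by rw [hC.1]; omega
  obtain ⟨p, hp⟩ := Finset.card_pos.1 hC1
  obtain ⟨q, hq⟩ := placement_nonempty hk (hC.2.1 p hp)
  exact Finset.card_pos.2 ⟨q.2, mem_rws.2 ⟨p, hp, Finset.mem_image.2 ⟨q, hq, rfl⟩⟩⟩

lemma two_le_cuts_card (hk : 1 ≤ k) (hs : 1 ≤ s) (hC : IsFreeConfig k n m s C)
    (hred : Reduced C) : 2 ≤ (cuts C).card := by
  have h0 := zero_mem_cuts hC
  have h1 := nrows_mem_cuts hred
  have h2 := nrows_pos hk hs hC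
  calc 2 = ({0, nrows C} : Finset ℕ).card := (Finset.card_pair (by omega)).symm
    _ ≤ (cuts C).card := Finset.card_le_card (by
        intro x hx
        rw [Finset.mem_insert, Finset.mem_singleton] at hx
        rcases hx with rfl | rfl
        · exact h0
        · exact h1)

lemma cuts_card_le (hs : 1 ≤ s) (hC : IsFreeConfig k n m s C) (hred : Reduced C) :
    (cuts C).card ≤ s + 1 := by
  have key : ∀ t ∈ (cuts C).erase 0, ∃ p ∈ C, t ∈ p.image Prod.snd := by
    intro t ht
    have h1 : t ∈ cuts C := Finset.mem_of_mem_erase ht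
    have h2 : t ≠ 0 := Finset.ne_of_mem_erase ht
    have : t ∈ rws C := by
      rw [hred, Finset.mem_Icc]
      have := Finset.mem_range.1 (Finset.mem_filter.1 h1).1
      omega
    exact mem_rws.1 this
  have hcut : ∀ t ∈ cuts C, ∀ p ∈ C, ¬ spans p t := fun t ht => (Finset.mem_filter.1 ht).2
  set fp : ℕ → Finset (ℕ × ℕ) := fun t =>
    if h : ∃ p ∈ C, t ∈ p.image Prod.snd then h.choose else ∅ with hfp
  have hspec : ∀ t ∈ (cuts C).erase 0, fp t ∈ C ∧ t ∈ (fp t).image Prod.snd := by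
    intro t ht
    have h := key t ht
    rw [hfp]
    simp only [dif_pos h]
    exact ⟨h.choose_spec.1, h.choose_spec.2⟩
  have hinj : Set.InjOn fp ((cuts C).erase 0) := by
    intro t ht t' ht' heq
    by_contra hne
    rcases Nat.lt_or_ge t t' with hlt | hge
    · refine hcut t (Finset.mem_of_mem_erase ht) (fp t) (hspec t ht).1 ?_
      obtain ⟨q, hq, hq2⟩ := Finset.mem_image.1 (hspec t ht).2
      obtain ⟨q', hq', hq2'⟩ := Finset.mem_image.1 (hspec t' ht').2
      rw [← heq] at hq'
      exact ⟨⟨q, hq, by omega⟩, ⟨q', hq', by omega⟩⟩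
    · have hlt : t' < t := by omega
      refine hcut t' (Finset.mem_of_mem_erase ht') (fp t') (hspec t' ht').1 ?_
      obtain ⟨q, hq, hq2⟩ := Finset.mem_image.1 (hspec t ht).2
      obtain ⟨q', hq', hq2'⟩ := Finset.mem_image.1 (hspec t' ht').2
      rw [heq] at hq
      exact ⟨⟨q', hq', by omega⟩, ⟨q, hq, by omega⟩⟩
  have hle : ((cuts C).erase 0).card ≤ C.card :=
    Finset.card_le_card_of_injOn fp (fun t ht => (hspec t ht).1) hinj
  have := Finset.card_erase_add_one (zero_mem_cuts hC)
  have hcard := hC.1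
  omega

lemma compl_cuts_card_le (hk : 1 ≤ k) (hC : IsFreeConfig k n m s C) :
    (Finset.range (nrows C + 1) \ cuts C).card ≤ s * (k - 1) := by
  have hsub : Finset.range (nrows C + 1) \ cuts C ⊆
      C.biUnion fun p => (Finset.range (nrows C + 1)).filter fun t => spans p t := by
    intro t ht
    rw [Finset.mem_sdiff] at ht
    obtain ⟨h1, h2⟩ := ht
    rw [cuts, Finset.mem_filter] at h2
    push_neg at h2
    obtain ⟨p, hp, hsp⟩ := h2 h1
    exact Finset.mem_biUnion.2 ⟨p, hp, Finset.mem_filter.2 ⟨h1, hsp⟩⟩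
  calc (Finset.range (nrows C + 1) \ cuts C).card
      ≤ (C.biUnion fun p => (Finset.range (nrows C + 1)).filter fun t => spans p t).card :=
        Finset.card_le_card hsub
    _ ≤ ∑ p ∈ C, ((Finset.range (nrows C + 1)).filter fun t => spans p t).card :=
        Finset.card_biUnion_le
    _ ≤ ∑ p ∈ C, (k - 1) := by
        apply Finset.sum_le_sum
        intro p hp
        obtain ⟨a, b, h1, h2, h3, h4, h5⟩ := placement_rows hk (hC.2.1 p hp)
        have : (Finset.range (nrows C + 1)).filter (fun t => spans p t) ⊆ Finset.Ico a b := by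
          intro t ht
          obtain ⟨⟨q, hq, hq2⟩, ⟨q', hq', hq2'⟩⟩ := (Finset.mem_filter.1 ht).2
          have ha : q.2 ∈ Finset.Icc a b := h5 ▸ Finset.mem_image.2 ⟨q, hq, rfl⟩
          have hb : q'.2 ∈ Finset.Icc a b := h5 ▸ Finset.mem_image.2 ⟨q', hq', rfl⟩
          rw [Finset.mem_Icc] at ha hb
          rw [Finset.mem_Ico]
          omega
        calc _ ≤ (Finset.Ico a b).card := Finset.card_le_card this
          _ = b - a := Nat.card_Ico a b
          _ ≤ k - 1 := by omega
    _ = s * (k - 1) := by rw [Finset.sum_const, hC.1, smul_eq_mul]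

variable {e : ℕ → ℕ} {f : ℕ → ℕ}

lemma sig_strictMono (e : ℕ → ℕ) : StrictMono (sig C₀ e) := by
  intro r r' h
  rw [sig, sig]
  have : ∑ t ∈ (cuts C₀).filter (· < r), e t ≤ ∑ t ∈ (cuts C₀).filter (· < r'), e t := by
    apply Finset.sum_le_sum_of_subset
    intro x hx
    rw [Finset.mem_filter] at hx ⊢
    exact ⟨hx.1, by omega⟩
  omega

lemma sig_shift {p} (hp : p ∈ C₀) {r r' : ℕ}
    (hr : r ∈ p.image Prod.snd) (hr' : r' ∈ p.image Prod.snd) (hle : r ≤ r') :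
    sig C₀ e r' = sig C₀ e r + (r' - r) := by
  have hfil : (cuts C₀).filter (· < r') = (cuts C₀).filter (· < r) := by
    apply Finset.Subset.antisymm
    · intro t ht
      rw [Finset.mem_filter] at ht ⊢
      refine ⟨ht.1, ?_⟩
      by_contra hlt
      obtain ⟨q, hq, hq2⟩ := Finset.mem_image.1 hr
      obtain ⟨q', hq', hq2'⟩ := Finset.mem_image.1 hr'
      have ht2 := ht.2
      exact (Finset.mem_filter.1 ht.1).2 p hp ⟨⟨q, hq, by omega⟩, ⟨q', hq', by omega⟩⟩
    · intro t ht
      rw [Finset.mem_filter] at ht ⊢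
      exact ⟨ht.1, by omega⟩
  rw [sig, sig, hfil]
  omega

lemma sig_ge {r : ℕ} : r ≤ sig C₀ e r := by
  rw [sig]; omega

lemma sig_le (hred : Reduced C₀)
    (he : e ∈ Finset.piAntidiag (cuts C₀) (m' - nrows C₀))
    (hm' : nrows C₀ ≤ m') {r : ℕ} (hr : r ∈ rws C₀) : sig C₀ e r ≤ m' := by
  rw [sig]
  have h1 : r ≤ nrows C₀ := by
    rw [hred, Finset.mem_Icc] at hr; exact hr.2
  have h2 : ∑ t ∈ (cuts C₀).filter (· < r), e t ≤ ∑ t ∈ cuts C₀, e t :=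
    Finset.sum_le_sum_of_subset (Finset.filter_subset _ _)
  have h3 : ∑ t ∈ cuts C₀, e t = m' - nrows C₀ := (Finset.mem_piAntidiag.1 he).1
  omega

lemma Phi_config (hk : 1 ≤ k) (hC : IsFreeConfig k n m s C₀) (hred : Reduced C₀)
    (hm' : nrows C₀ ≤ m') (he : e ∈ Finset.piAntidiag (cuts C₀) (m' - nrows C₀)) :
    IsFreeConfig k n m' s (cfgMap (sig C₀ e) C₀) := by
  apply config_map hk hC
  · exact fun r _ r' _ h => (sig_strictMono e).injective h
  · exact fun p hp r hr r' hr' hle => sig_shift hp hr hr' hle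
  · intro r hr
    have h1 : 1 ≤ r := by rw [hred, Finset.mem_Icc] at hr; exact hr.1
    exact le_trans h1 sig_ge
  · exact fun r hr => sig_le hred he hm' hr

lemma cfgMap_comp (f g : ℕ → ℕ) : cfgMap g (cfgMap f C) = cfgMap (g ∘ f) C := by
  rw [cfgMap, cfgMap, cfgMap, Finset.image_image]
  apply Finset.image_congr
  intro p _
  simp only [Function.comp_apply]
  rw [Finset.image_image]
  rfl

lemma cfgMap_id_of (h : ∀ r ∈ rws C, f r = r) : cfgMap f C = C := by
  rw [cfgMap]
  have key : ∀ p ∈ C, p.image (siteMap f) = p := by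
    intro p hp
    have h2 : ∀ q ∈ p, siteMap f q = id q := by
      intro q hq
      have hq2 : q.2 ∈ rws C := rows_subset_rws hp (Finset.mem_image.2 ⟨q, hq, rfl⟩)
      show (q.1, f q.2) = q
      rw [h _ hq2]
    rw [Finset.image_congr h2, Finset.image_id]
  calc C.image (fun p => p.image (siteMap f)) = C.image id := Finset.image_congr key
    _ = C := Finset.image_id

lemma rk_sig (hred : Reduced C₀) (e : ℕ → ℕ) {r : ℕ} (hr : r ∈ rws C₀) :
    rk (cfgMap (sig C₀ e) C₀) (sig C₀ e r) = r := by
  have hr2 : 1 ≤ r ∧ r ≤ nrows C₀ := by rw [hred, Finset.mem_Icc] at hr; exact hr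
  rw [rk, rws_cfgMap, Finset.filter_image]
  rw [Finset.card_image_of_injOn (fun a _ b _ h => (sig_strictMono e).injective h)]
  have h1 : (rws C₀).filter (fun x => sig C₀ e x ≤ sig C₀ e r) = (rws C₀).filter (· ≤ r) := by
    apply Finset.filter_congr
    intro x _
    simp only [(sig_strictMono e).le_iff_le]
  rw [h1, hred]
  have h2 : (Finset.Icc 1 (nrows C₀)).filter (· ≤ r) = Finset.Icc 1 r := by
    ext x
    simp only [Finset.mem_filter, Finset.mem_Icc]
    omega
  rw [h2, Nat.card_Icc]
  omega

lemma reduce_Phi (hred : Reduced C₀) (e : ℕ → ℕ) :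
    reduce (cfgMap (sig C₀ e) C₀) = C₀ := by
  rw [reduce, cfgMap_comp]
  apply cfgMap_id_of
  intro r hr
  exact rk_sig hred e hr

/-- Numbers of empty rows at each cut of the reduction. -/
noncomputable def psi (m' : ℕ) (C : Finset (Finset (ℕ × ℕ))) : ℕ → ℕ :=
  fun t => ((Finset.Icc 1 m' \ rws C).filter fun r => rk C r = t).card

lemma nrows_le_m' (hC : IsFreeConfig k n m' s C) : nrows C ≤ m' := by
  have := Finset.card_le_card (rws_subset_Icc hC)
  rw [Nat.card_Icc] at this
  rw [nrows]
  omega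

lemma empty_rk_mem_cuts (hk : 1 ≤ k) (hC : IsFreeConfig k n m' s C) {r : ℕ}
    (hr : r ∈ Finset.Icc 1 m' \ rws C) : rk C r ∈ cuts (reduce C) := by
  rw [Finset.mem_sdiff] at hr
  obtain ⟨hr1, hr2⟩ := hr
  rw [cuts, Finset.mem_filter, nrows_reduce hC]
  refine ⟨Finset.mem_range.2 (by have := rk_le_nrows (C := C) (r := r); omega), ?_⟩
  intro p₀ hp₀ hsp
  rw [reduce, cfgMap] at hp₀
  obtain ⟨p, hp, rfl⟩ := Finset.mem_image.1 hp₀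
  obtain ⟨⟨q1, hq1, hq1e⟩, ⟨q2, hq2, hq2e⟩⟩ := hsp
  obtain ⟨q1', hq1', rfl⟩ := Finset.mem_image.1 hq1
  obtain ⟨q2', hq2', rfl⟩ := Finset.mem_image.1 hq2
  have hq1r : q1'.2 ∈ p.image Prod.snd := Finset.mem_image.2 ⟨q1', hq1', rfl⟩
  have hq2r : q2'.2 ∈ p.image Prod.snd := Finset.mem_image.2 ⟨q2', hq2', rfl⟩
  have hm1 : (siteMap (rk C) q1').2 = rk C q1'.2 := rfl
  have hm2 : (siteMap (rk C) q2').2 = rk C q2'.2 := rfl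
  rw [hm1] at hq1e
  rw [hm2] at hq2e
  -- q1'.2 < r
  have hlt1 : q1'.2 < r := by
    rcases Nat.lt_or_ge q1'.2 r with h | h
    · exact h
    · exfalso
      have hne : q1'.2 ≠ r := fun hh => hr2 (hh ▸ rows_subset_rws hp hq1r)
      have : rk C r < rk C q1'.2 := rk_lt (rows_subset_rws hp hq1r) (by omega)
      omega
  -- r < q2'.2
  have hlt2 : r < q2'.2 := by
    rcases Nat.lt_or_ge r q2'.2 with h | h
    · exact h
    · exfalso
      have := rk_mono (C := C) h
      omega
  obtain ⟨a, b, h1, h2, h3, h4, h5⟩ := placement_rows hk (hC.2.1 p hp)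
  rw [h5, Finset.mem_Icc] at hq1r hq2r
  have : r ∈ p.image Prod.snd := by
    rw [h5, Finset.mem_Icc]
    omega
  exact hr2 (rows_subset_rws hp this)

lemma psi_mem (hk : 1 ≤ k) (hC : IsFreeConfig k n m' s C) :
    psi m' C ∈ Finset.piAntidiag (cuts (reduce C)) (m' - nrows C) := by
  rw [Finset.mem_piAntidiag]
  constructor
  · have h2 : (cuts (reduce C)).sum (psi m' C) = (Finset.Icc 1 m' \ rws C).card :=
      (Finset.card_eq_sum_card_fiberwise (fun r hr => empty_rk_mem_cuts hk hC hr)).symm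
    rw [h2, Finset.card_sdiff_of_subset (rws_subset_Icc hC), Nat.card_Icc, nrows]
    omega
  · intro t ht
    rw [psi] at ht
    obtain ⟨r, hr⟩ := Finset.card_pos.1 (Nat.pos_of_ne_zero ht)
    rw [Finset.mem_filter] at hr
    exact hr.2 ▸ empty_rk_mem_cuts hk hC hr.1

lemma rk_le_self {r : ℕ} (hC : IsFreeConfig k n m' s C) : rk C r ≤ r := by
  have : (rws C).filter (· ≤ r) ⊆ Finset.Icc 1 r := by
    intro x hx
    rw [Finset.mem_filter] at hx
    have := rws_subset_Icc hC hx.1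
    rw [Finset.mem_Icc] at this ⊢
    exact ⟨this.1, hx.2⟩
  have := Finset.card_le_card this
  rw [Nat.card_Icc] at this
  rw [rk]
  omega

lemma empty_count (hC : IsFreeConfig k n m' s C) {r : ℕ} (hr : r ∈ rws C) :
    rk C r + ((Finset.Icc 1 m' \ rws C).filter (· < r)).card = r := by
  have hrm : r ∈ Finset.Icc 1 m' := rws_subset_Icc hC hr
  rw [Finset.mem_Icc] at hrm
  have hsplit : Finset.Icc 1 r =
      (rws C).filter (· ≤ r) ∪ (Finset.Icc 1 m' \ rws C).filter (· < r) := by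
    ext x
    simp only [Finset.mem_Icc, Finset.mem_union, Finset.mem_filter, Finset.mem_sdiff]
    constructor
    · rintro ⟨hx1, hx2⟩
      by_cases hx : x ∈ rws C
      · exact Or.inl ⟨hx, hx2⟩
      · refine Or.inr ⟨⟨⟨hx1, by omega⟩, hx⟩, ?_⟩
        rcases Nat.lt_or_ge x r with h | h
        · exact h
        · exact absurd (by omega : x = r) (fun hh => hx (hh ▸ hr))
    · rintro (⟨hx, hx2⟩ | ⟨⟨hx1, _⟩, hx2⟩)
      · have := rws_subset_Icc hC hx
        rw [Finset.mem_Icc] at this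
        exact ⟨this.1, hx2⟩
      · exact ⟨hx1.1, by omega⟩
  have hdisj : Disjoint ((rws C).filter (· ≤ r))
      ((Finset.Icc 1 m' \ rws C).filter (· < r)) := by
    rw [Finset.disjoint_left]
    intro x hx hx'
    rw [Finset.mem_filter] at hx
    rw [Finset.mem_filter, Finset.mem_sdiff] at hx'
    exact hx'.1.2 hx.1
  have := congrArg Finset.card hsplit
  rw [Nat.card_Icc, Finset.card_union_of_disjoint hdisj] at this
  rw [rk]
  omega

lemma sig_psi (hk : 1 ≤ k) (hC : IsFreeConfig k n m' s C) {r : ℕ} (hr : r ∈ rws C) :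
    sig (reduce C) (psi m' C) (rk C r) = r := by
  rw [sig]
  have ha : ∑ t ∈ (cuts (reduce C)).filter (· < rk C r), psi m' C t =
      ((Finset.Icc 1 m' \ rws C).filter fun r' => rk C r' < rk C r).card := by
    have hmap : ∀ x ∈ (Finset.Icc 1 m' \ rws C).filter fun r' => rk C r' < rk C r,
        rk C x ∈ (cuts (reduce C)).filter (· < rk C r) := by
      intro x hx
      rw [Finset.mem_filter] at hx
      rw [Finset.mem_filter]
      exact ⟨empty_rk_mem_cuts hk hC hx.1, hx.2⟩
    have hc := Finset.card_eq_sum_card_fiberwise hmap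
    rw [hc]
    apply Finset.sum_congr rfl
    intro t ht
    rw [Finset.mem_filter] at ht
    rw [psi]
    congr 1
    rw [Finset.filter_filter]
    apply Finset.filter_congr
    intro x _
    exact ⟨fun hh => ⟨by omega, hh⟩, fun hh => hh.2⟩
  have hb : ((Finset.Icc 1 m' \ rws C).filter fun r' => rk C r' < rk C r) =
      ((Finset.Icc 1 m' \ rws C).filter (· < r)) := by
    apply Finset.filter_congr
    intro x hx
    rw [Finset.mem_sdiff] at hx
    constructor
    · intro h
      rcases Nat.lt_or_ge x r with h' | h'
      · exact h'
      · exact absurd h (by have := rk_mono (C := C) h'; omega)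
    · intro h
      exact rk_lt hr h
  rw [ha, hb, empty_count hC hr]

lemma Phi_psi (hk : 1 ≤ k) (hC : IsFreeConfig k n m' s C) :
    cfgMap (sig (reduce C) (psi m' C)) (reduce C) = C := by
  rw [reduce, cfgMap_comp]
  apply cfgMap_id_of
  intro r hr
  show sig (reduce C) (psi m' C) (rk C r) = r
  exact sig_psi hk hC hr

lemma rank_inj {T : Finset ℕ} {x y : ℕ} (hx : x ∈ T) (hy : y ∈ T)
    (h : (T.filter (· ≤ x)).card = (T.filter (· ≤ y)).card) : x = y := by
  rcases le_total x y with hle | hle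
  · by_contra hne
    have hsub : T.filter (· ≤ x) ⊆ T.filter (· ≤ y) := by
      intro z hz
      rw [Finset.mem_filter] at hz ⊢
      exact ⟨hz.1, by omega⟩
    have := Finset.eq_of_subset_of_card_le hsub (by omega)
    have hy' : y ∈ T.filter (· ≤ x) := this.symm ▸ Finset.mem_filter.2 ⟨hy, le_refl _⟩
    rw [Finset.mem_filter] at hy'
    omega
  · by_contra hne
    have hsub : T.filter (· ≤ y) ⊆ T.filter (· ≤ x) := by
      intro z hz
      rw [Finset.mem_filter] at hz ⊢
      exact ⟨hz.1, by omega⟩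
    have := Finset.eq_of_subset_of_card_le hsub (by omega)
    have hx' : x ∈ T.filter (· ≤ y) := this.symm ▸ Finset.mem_filter.2 ⟨hx, le_refl _⟩
    rw [Finset.mem_filter] at hx'
    omega

lemma sig_zero (e : ℕ → ℕ) : sig C₀ e 0 = 0 := by
  rw [sig]
  have h : (cuts C₀).filter (· < 0) = ∅ := by
    apply Finset.filter_false_of_mem
    intro x _
    omega
  rw [h]
  simp


lemma Phi_inj (hred : Reduced C₀)
    {e e' : ℕ → ℕ} (he : e ∈ Finset.piAntidiag (cuts C₀) (m' - nrows C₀))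
    (he' : e' ∈ Finset.piAntidiag (cuts C₀) (m' - nrows C₀))
    (heq : cfgMap (sig C₀ e) C₀ = cfgMap (sig C₀ e') C₀) : e = e' := by
  have hagree : ∀ r ∈ rws C₀, sig C₀ e r = sig C₀ e' r := by
    intro r hr
    have h1 : rk (cfgMap (sig C₀ e) C₀) (sig C₀ e r) = r := rk_sig hred e hr
    have h2 : rk (cfgMap (sig C₀ e) C₀) (sig C₀ e' r) = r := by
      rw [heq]; exact rk_sig hred e' hr
    have h3 : ((rws (cfgMap (sig C₀ e) C₀)).filter (· ≤ sig C₀ e r)).card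
        = ((rws (cfgMap (sig C₀ e) C₀)).filter (· ≤ sig C₀ e' r)).card := h1.trans h2.symm
    refine rank_inj ?_ ?_ h3
    · rw [rws_cfgMap]; exact Finset.mem_image.2 ⟨r, hr, rfl⟩
    · rw [heq, rws_cfgMap]; exact Finset.mem_image.2 ⟨r, hr, rfl⟩
  have hagree0 : ∀ r, r ≤ nrows C₀ → sig C₀ e r = sig C₀ e' r := by
    intro r hrle
    rcases Nat.eq_zero_or_pos r with rfl | hp
    · rw [sig_zero, sig_zero]
    · exact hagree r (by rw [hred, Finset.mem_Icc]; omega)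
  have hlt : ∀ t ∈ cuts C₀, t < nrows C₀ → e t = e' t := by
    intro t ht hlt
    have hins : (cuts C₀).filter (· < t + 1) = insert t ((cuts C₀).filter (· < t)) := by
      ext x
      simp only [Finset.mem_filter, Finset.mem_insert]
      constructor
      · rintro ⟨hx1, hx2⟩
        rcases Nat.lt_or_ge x t with h | h
        · exact Or.inr ⟨hx1, h⟩
        · exact Or.inl (by omega)
      · rintro (rfl | ⟨hx1, hx2⟩)
        · exact ⟨ht, by omega⟩
        · exact ⟨hx1, by omega⟩
    have hsplit : ∀ ee : ℕ → ℕ, ∑ u ∈ (cuts C₀).filter (· < t + 1), ee u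
        = ee t + ∑ u ∈ (cuts C₀).filter (· < t), ee u := by
      intro ee
      rw [hins, Finset.sum_insert (by simp)]
    have h1 := hagree0 (t + 1) (by omega)
    have h2 := hagree0 t (by omega)
    have e1 := hsplit e
    have e2 := hsplit e'
    rw [sig, sig] at h1 h2
    omega
  funext t
  by_cases htc : t ∈ cuts C₀
  · have htle : t ≤ nrows C₀ := by
      have := (Finset.mem_filter.1 htc).1
      rw [Finset.mem_range] at this
      omega
    rcases Nat.lt_or_ge t (nrows C₀) with h | h
    · exact hlt t htc h
    · have hrest : ∑ u ∈ (cuts C₀).erase t, e u = ∑ u ∈ (cuts C₀).erase t, e' u := by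
        apply Finset.sum_congr rfl
        intro u hu
        have hu1 := Finset.mem_of_mem_erase hu
        have hu2 := Finset.ne_of_mem_erase hu
        have hu3 : u ≤ nrows C₀ := by
          have := (Finset.mem_filter.1 hu1).1
          rw [Finset.mem_range] at this
          omega
        exact hlt u hu1 (by omega)
      have hs1 : ∑ u ∈ cuts C₀, e u = ∑ u ∈ cuts C₀, e' u :=
        ((Finset.mem_piAntidiag.1 he).1).trans ((Finset.mem_piAntidiag.1 he').1).symm
      have q1 := Finset.add_sum_erase _ e htc
      have q2 := Finset.add_sum_erase _ e' htc
      omega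
  · have h1 : e t = 0 := by
      by_contra hne
      exact htc ((Finset.mem_piAntidiag.1 he).2 t hne)
    have h2 : e' t = 0 := by
      by_contra hne
      exact htc ((Finset.mem_piAntidiag.1 he').2 t hne)
    rw [h1, h2]

lemma fiber_card (hk : 1 ≤ k) {mm : ℕ} (hC₀ : IsFreeConfig k n mm s C₀) (hred : Reduced C₀)
    (hm' : nrows C₀ ≤ m') :
    ((configs k n m' s).filter fun C => reduce C = C₀).card
      = (Finset.piAntidiag (cuts C₀) (m' - nrows C₀)).card := by
  refine (Finset.card_bij (fun e _ => cfgMap (sig C₀ e) C₀) ?_ ?_ ?_).symm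
  · intro e he
    exact Finset.mem_filter.2 ⟨mem_configs.2 (Phi_config hk hC₀ hred hm' he),
      reduce_Phi hred e⟩
  · intro e he e' he' heq
    exact Phi_inj hred he he' heq
  · intro C hC
    rw [Finset.mem_filter] at hC
    obtain ⟨hC1, hC2⟩ := hC
    have hCc := mem_configs.1 hC1
    subst hC2
    refine ⟨psi m' C, ?_, ?_⟩
    · rw [nrows_reduce hCc]
      exact psi_mem hk hCc
    · exact Phi_psi hk hCc

lemma fiber_empty (hm' : m' < nrows C₀) :
    ((configs k n m' s).filter fun C => reduce C = C₀) = ∅ := by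
  rw [Finset.eq_empty_iff_forall_notMem]
  intro C hC
  rw [Finset.mem_filter] at hC
  have hCc := mem_configs.1 hC.1
  have h1 : nrows C₀ = nrows C := by rw [← hC.2, nrows_reduce hCc]
  have := nrows_le_m' hCc
  omega

lemma freeCount_eq_card : freeCount k n m s = (configs k n m s).card := by
  have h : {C | IsFreeConfig k n m s C} = ↑(configs k n m s) := by
    ext C
    rw [Set.mem_setOf_eq, Finset.mem_coe, mem_configs]
  rw [freeCount, h, Set.ncard_coe_finset]

lemma card_piAntidiag (S : Finset ℕ) (hS : S.Nonempty) (t : ℕ) :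
    (Finset.piAntidiag S t).card = (t + (S.card - 1)).choose (S.card - 1) := by
  classical
  have e1 : {f // f ∈ Finset.piAntidiag S t} ≃ {P : ↥S → ℕ // ∑ i, P i = t} :=
    { toFun := fun f => ⟨fun i => f.1 i, by
        have h := (Finset.mem_piAntidiag.1 f.2).1
        rw [Finset.sum_coe_sort S f.1]
        exact h⟩
      invFun := fun P => ⟨fun i => if h : i ∈ S then P.1 ⟨i, h⟩ else 0, by
        rw [Finset.mem_piAntidiag]
        constructor
        · rw [← Finset.sum_attach S (fun i => if h : i ∈ S then P.1 ⟨i, h⟩ else 0)]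
          have : ∀ x ∈ S.attach, (if h : (x : ℕ) ∈ S then P.1 ⟨x, h⟩ else 0) = P.1 x := by
            intro x _
            rw [dif_pos x.2]
          rw [Finset.sum_congr rfl this, ← Finset.univ_eq_attach]
          exact P.2
        · intro i hi
          by_contra hiS
          rw [dif_neg hiS] at hi
          exact hi rfl⟩
      left_inv := by
        rintro ⟨f, hf⟩
        apply Subtype.ext
        funext i
        by_cases h : i ∈ S
        · simp only [dif_pos h]
        · simp only [dif_neg h]
          by_contra h0
          exact h ((Finset.mem_piAntidiag.1 hf).2 i fun hh => h0 hh.symm)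
      right_inv := by
        rintro ⟨P, hP⟩
        apply Subtype.ext
        funext i
        simp only [dif_pos i.2] }
  have hg : 1 ≤ S.card := Finset.card_pos.2 hS
  calc (Finset.piAntidiag S t).card
      = Fintype.card {f // f ∈ Finset.piAntidiag S t} := (Fintype.card_coe _).symm
    _ = Fintype.card (Sym ↥S t) :=
        Fintype.card_congr (e1.trans (Sym.equivNatSumOfFintype ↥S t).symm)
    _ = (Fintype.card ↥S + t - 1).choose t := Sym.card_sym_eq_choose t
    _ = (t + (S.card - 1)).choose (S.card - 1) := by
        rw [Fintype.card_coe]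
        have h1 : S.card + t - 1 = t + (S.card - 1) := by omega
        rw [h1]
        rw [← Nat.choose_symm (Nat.le_add_right t (S.card - 1))]
        congr 1
        omega

lemma count_formula (hk : 1 ≤ k) (hs : 1 ≤ s) (m' : ℕ) :
    (configs k n m' s).card = ∑ C₀ ∈ Red k n s,
      (m' + ((cuts C₀).card - 1) - nrows C₀).choose ((cuts C₀).card - 1) := by
  rw [Finset.card_eq_sum_card_fiberwise (f := reduce) (t := Red k n s)
    (fun C hC => reduce_mem_Red hk hC)]
  apply Finset.sum_congr rfl
  intro C₀ hC₀
  have hC₀m := Finset.mem_filter.1 hC₀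
  have hcfg : IsFreeConfig k n (k * s) s C₀ := mem_configs.1 hC₀m.1
  have hred : Reduced C₀ := hC₀m.2
  have hg2 : 2 ≤ (cuts C₀).card := two_le_cuts_card hk hs hcfg hred
  rcases Nat.lt_or_ge m' (nrows C₀) with h | h
  · rw [fiber_empty h, Finset.card_empty]
    symm
    apply Nat.choose_eq_zero_of_lt
    omega
  · rw [fiber_card hk hcfg hred h, card_piAntidiag _ ⟨0, zero_mem_cuts hcfg⟩]
    congr 1
    omega

lemma fwdDiff_iter_choose_lt (d N : ℕ) (hd : d < N) :
    (fwdDiff (1 : ℕ))^[N] (fun x => (x.choose d : ℤ)) = fun _ => 0 := by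
  obtain ⟨j, rfl⟩ := Nat.exists_eq_add_of_lt hd
  funext z
  rw [(by ring : d + j + 1 = (j + 1) + d), Function.iterate_add_apply]
  have hch := fwdDiff_iter_choose 0 d
  rw [add_zero] at hch
  rw [hch]
  simp only [Nat.choose_zero_right, Nat.cast_one]
  rw [Function.iterate_succ_apply, fwdDiff_const]
  rw [fwdDiff_iter_eq_sum_shift]
  simp

lemma alt_vanish {N d y : ℕ} (hd : d < N) (hy : N ≤ y) :
    ∑ i ∈ Finset.range (N + 1), (-1 : ℤ) ^ i * (N.choose i : ℤ) * (((y - i).choose d : ℕ) : ℤ)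
      = 0 := by
  have h0 := congrFun (fwdDiff_iter_choose_lt d N hd) (y - N)
  rw [fwdDiff_iter_eq_sum_shift] at h0
  -- h0 : ∑ k ∈ range (N+1), ((-1)^(N-k) * C(N,k)) • ((y - N + k • 1).choose d : ℤ) = 0
  rw [← Finset.sum_range_reflect]
  rw [← h0]
  apply Finset.sum_congr rfl
  intro j hj
  rw [Finset.mem_range] at hj
  have h1 : N + 1 - 1 - j = N - j := by omega
  have h2 : y - (N - j) = y - N + j • 1 := by
    simp only [smul_eq_mul, mul_one]
    omega
  have h3 : N.choose (N - j) = N.choose j := Nat.choose_symm (by omega)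
  rw [h1, h2, h3]
  simp only [smul_eq_mul, zsmul_eq_mul]

end FreeRec

/-- Homogeneous recurrence, free boundary:
`∑_{i=0}^{s+1} (-1)^i C(s+1,i) a(m-i, s) = 0` for `m ≥ k s + 1`. -/
theorem free_homogeneous_recurrence (k n s : ℕ) (hk : 2 ≤ k) (hn : 1 ≤ n) (hs : 1 ≤ s)
    (m : ℕ) (hm : k * s + 1 ≤ m) :
    ∑ i ∈ Finset.range (s + 2),
        (-1 : ℤ) ^ i * ((s + 1).choose i : ℤ) * (freeCount k n (m - i) s : ℤ) = 0 := by
  classical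
  have hk1 : 1 ≤ k := by omega
  have hmul : s * (k - 1) + s = k * s := by
    obtain ⟨k0, rfl⟩ : ∃ k0, k = k0 + 1 := ⟨k - 1, by omega⟩
    simp only [Nat.add_sub_cancel]
    ring
  have key : ∀ i, (freeCount k n (m - i) s : ℤ)
      = ∑ C₀ ∈ FreeRec.Red k n s,
          ((((m - i) + ((FreeRec.cuts C₀).card - 1) - FreeRec.nrows C₀).choose
            ((FreeRec.cuts C₀).card - 1) : ℕ) : ℤ) := by
    intro i
    rw [FreeRec.freeCount_eq_card, FreeRec.count_formula hk1 hs]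
    push_cast
    rfl
  calc ∑ i ∈ Finset.range (s + 2),
        (-1 : ℤ) ^ i * ((s + 1).choose i : ℤ) * (freeCount k n (m - i) s : ℤ)
      = ∑ i ∈ Finset.range (s + 2), ∑ C₀ ∈ FreeRec.Red k n s,
          (-1 : ℤ) ^ i * ((s + 1).choose i : ℤ) *
            ((((m - i) + ((FreeRec.cuts C₀).card - 1) - FreeRec.nrows C₀).choose
              ((FreeRec.cuts C₀).card - 1) : ℕ) : ℤ) := by
        apply Finset.sum_congr rfl
        intro i _
        rw [key i, Finset.mul_sum]
    _ = ∑ C₀ ∈ FreeRec.Red k n s, ∑ i ∈ Finset.range (s + 2),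
          (-1 : ℤ) ^ i * ((s + 1).choose i : ℤ) *
            ((((m - i) + ((FreeRec.cuts C₀).card - 1) - FreeRec.nrows C₀).choose
              ((FreeRec.cuts C₀).card - 1) : ℕ) : ℤ) := Finset.sum_comm
    _ = 0 := by
        apply Finset.sum_eq_zero
        intro C₀ hC₀
        have hC₀m := Finset.mem_filter.1 hC₀
        have hcfg : IsFreeConfig k n (k * s) s C₀ := FreeRec.mem_configs.1 hC₀m.1
        have hred := hC₀m.2
        set g := (FreeRec.cuts C₀).card with hgdef
        set m₀ := FreeRec.nrows C₀ with hm₀def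
        have hg2 : 2 ≤ g := FreeRec.two_le_cuts_card hk1 hs hcfg hred
        have hgs : g ≤ s + 1 := FreeRec.cuts_card_le hs hcfg hred
        have hsub : FreeRec.cuts C₀ ⊆ Finset.range (m₀ + 1) := Finset.filter_subset _ _
        have hcompl := FreeRec.compl_cuts_card_le hk1 hcfg
        rw [Finset.card_sdiff_of_subset hsub, Finset.card_range] at hcompl
        have hy : s + 1 ≤ m + (g - 1) - m₀ := by omega
        have harg : ∀ i ∈ Finset.range (s + 2),
            (m - i) + (g - 1) - m₀ = (m + (g - 1) - m₀) - i := by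
          intro i hi
          rw [Finset.mem_range] at hi
          have hsk : s ≤ k * s := by omega
          omega
        rw [Finset.sum_congr rfl (fun i hi => by rw [harg i hi])]
        exact FreeRec.alt_vanish (by omega) hy
end

section
/- (Lemma on j unrestricted k-mers, with top restriction.) Let t ≥ 0 and j ≥ 0 be integers with s = t + 2 + j, and for an integer m' ≥ 1 let A(m') denote the number of configurations of s k-mers on the n × m' lattice in which row jk'+1 is bottom-anchored for every j' ∈ {0, …, t} (here k' = k, i.e., the anchored rows are 1, k+1, …, tk+1) and at least one placement occupies a site in row m'. Then for every integer m ≥ ks + 1, ∑_{i=0}^{j+1} (−1)^i · C(j+1, i) · A(m−i) = 0. -/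
/-- A placement touches row `r` from above: it occupies a site in row `r`
and all its sites are in rows `≥ r` (i.e. it is horizontal in row `r`, or
vertical occupying rows `r, r+1, …, r+k-1`). -/
def TouchesFromAbove (p : Finset (ℕ × ℕ)) (r : ℕ) : Prop :=
  (∃ q ∈ p, q.2 = r) ∧ ∀ q ∈ p, r ≤ q.2

/-- A placement overhangs row `r`: it occupies a site in row `r` and also a site
in a row strictly below `r` (hence it is vertical with lowest occupied row `< r`). -/
def Overhangs (p : Finset (ℕ × ℕ)) (r : ℕ) : Prop :=
  (∃ q ∈ p, q.2 = r) ∧ ∃ q ∈ p, q.2 < r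

/-- In a configuration, row `r` is bottom-anchored: at least one placement occupies
a site in row `r`, and every placement occupying a site in row `r` touches row `r`
from above. -/
def BottomAnchored (C : Finset (Finset (ℕ × ℕ))) (r : ℕ) : Prop :=
  (∃ p ∈ C, ∃ q ∈ p, q.2 = r) ∧
    ∀ p ∈ C, (∃ q ∈ p, q.2 = r) → TouchesFromAbove p r

/-- In a configuration, row `r` is barred: at least one placement overhangs row `r`. -/
def Barred (C : Finset (Finset (ℕ × ℕ))) (r : ℕ) : Prop :=
  ∃ p ∈ C, Overhangs p r

/-!
Write `L = t k + 1` for the highest anchored row. Expanding `(-1)^i C(j+1, i)` over the subsets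
`T ⊆ {0, …, j}` of size `i`, the sum counts pairs `(T, C)` with `C` counted by `A(m - #T)`, with
sign `(-1)^#T`; a sign-reversing involution on these pairs shows it vanishes.

A cut row of `C` is an occupied row `r ∈ [L, M)` such that no placement occupies both `r` and
`r + 1`; number the cut rows from the bottom, and call `r` active if its number lies in `T` or
row `r + 1` is empty. At the lowest active row `w`, with number `ℓ`: if `ℓ ∈ T`, remove `ℓ` from
`T` and insert an empty row above `w`; otherwise row `w + 1` is empty, delete it and add `ℓ` to
`T`. Rows up to `w` are untouched and the cut rows are renumbered consistently, so `w` is again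
the lowest active row and the map is an involution changing the parity of `#T`.

An active row exists as soon as `m > k s`. Otherwise every row from `L` to the top `M` is
occupied, and `M - L` is at most the number of cut rows plus the number of rows crossed by a
placement. Placements lying above `L` number at most `s - (t + 1) = j + 1`, as the `t + 1`
anchored rows need distinct placements, and each of them crosses at most `k - 1` rows; the
placements meeting row `L` cross rows below `L + k - 1` only. Each cut row has its own
placement above `L`, so the cut numbers are at most `j`, avoid `T`, and there are at most
`j + 1 - #T` of them. Altogether `m - #T = M ≤ k s - #T`.
-/

namespace KmerRowGap

open Finset
open scoped Classical

abbrev Config := Finset (Finset (ℕ × ℕ))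

def rowsOf (p : Finset (ℕ × ℕ)) : Finset ℕ := p.image Prod.snd

lemma mem_rowsOf {p : Finset (ℕ × ℕ)} {a : ℕ} : a ∈ rowsOf p ↔ ∃ q ∈ p, q.2 = a := by
  simp [rowsOf]

section Placement

variable {k n M : ℕ} {p : Finset (ℕ × ℕ)}

lemma _root_.IsFreePlacement.subset_box (hp : IsFreePlacement k n M p) :
    p ⊆ Icc 1 n ×ˢ Icc 1 M := by
  rcases hp with ⟨c, r, _, _, _, _, rfl⟩ | ⟨c, r, _, _, _, _, rfl⟩ <;>
  · intro q hq
    simp only [horizKmer, vertKmer, mem_image, mem_range] at hq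
    obtain ⟨i, hi, rfl⟩ := hq
    simp only [mem_product, mem_Icc]
    omega

lemma _root_.IsFreePlacement.exists_rowsOf_eq_Ico (hk : 1 ≤ k) (hp : IsFreePlacement k n M p) :
    ∃ r e, 1 ≤ r ∧ 1 ≤ e ∧ e ≤ k ∧ r + e ≤ M + 1 ∧ rowsOf p = Ico r (r + e) := by
  rcases hp with ⟨c, r, _, _, _, _, rfl⟩ | ⟨c, r, _, _, _, _, rfl⟩
  · refine ⟨r, 1, by omega, le_rfl, hk, by omega, ?_⟩
    ext a
    simp only [rowsOf, horizKmer, mem_image, mem_range, mem_Ico]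
    constructor
    · rintro ⟨_, ⟨i, _, rfl⟩, rfl⟩
      omega
    · intro ha
      exact ⟨(c, a), ⟨0, by omega, by simp; omega⟩, rfl⟩
  · refine ⟨r, k, by omega, hk, le_rfl, by omega, ?_⟩
    ext a
    simp only [rowsOf, vertKmer, mem_image, mem_range, mem_Ico]
    constructor
    · rintro ⟨_, ⟨i, _, rfl⟩, rfl⟩
      omega
    · intro ha
      exact ⟨(c, a), ⟨a - r, by omega, by simp; omega⟩, rfl⟩

variable (hk : 1 ≤ k) (hp : IsFreePlacement k n M p)
include hk hp

lemma _root_.IsFreePlacement.mem_rowsOf_of_le_of_le {a b x : ℕ} (ha : a ∈ rowsOf p)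
    (hb : b ∈ rowsOf p) (hax : a ≤ x) (hxb : x ≤ b) : x ∈ rowsOf p := by
  obtain ⟨r, e, -, -, -, -, he⟩ := hp.exists_rowsOf_eq_Ico hk
  simp only [he, mem_Ico] at ha hb ⊢
  omega

lemma _root_.IsFreePlacement.lt_add_of_mem_rowsOf {a b : ℕ} (ha : a ∈ rowsOf p)
    (hb : b ∈ rowsOf p) : b < a + k := by
  obtain ⟨r, e, -, -, _, -, he⟩ := hp.exists_rowsOf_eq_Ico hk
  simp only [he, mem_Ico] at ha hb
  omega

lemma _root_.IsFreePlacement.rowsOf_subset_Icc : rowsOf p ⊆ Icc 1 M := by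
  obtain ⟨r, e, _, _, _, _, he⟩ := hp.exists_rowsOf_eq_Ico hk
  intro a
  rw [he, mem_Ico, mem_Icc]
  omega

lemma _root_.IsFreePlacement.card_filter_succ_mem_rowsOf_le :
    #{a ∈ rowsOf p | a + 1 ∈ rowsOf p} ≤ k - 1 := by
  obtain ⟨r, e, _, _, _, _, he⟩ := hp.exists_rowsOf_eq_Ico hk
  have : {a ∈ rowsOf p | a + 1 ∈ rowsOf p} = Ico r (r + e - 1) := by
    ext a
    simp only [he, mem_filter, mem_Ico]
    omega
  rw [this, Nat.card_Ico]
  omega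

lemma _root_.IsFreePlacement.rowsOf_le_or_lt {w : ℕ} (hw : ¬ (w ∈ rowsOf p ∧ w + 1 ∈ rowsOf p)) :
    (∀ a ∈ rowsOf p, a ≤ w) ∨ ∀ a ∈ rowsOf p, w < a := by
  obtain ⟨r, e, _, _, _, _, he⟩ := hp.exists_rowsOf_eq_Ico hk
  simp only [he, mem_Ico] at hw ⊢
  by_cases h : r ≤ w
  · left; omega
  · right; omega

end Placement

lemma card_filter_lt_lt_card {S : Finset ℕ} {r : ℕ} (hr : r ∈ S) : #{x ∈ S | x < r} < #S :=
  card_lt_card (filter_ssubset.2 ⟨r, hr, lt_irrefl r⟩)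

lemma strictMonoOn_card_filter_lt (S : Finset ℕ) :
    StrictMonoOn (fun r => #{x ∈ S | x < r}) S := by
  intro r hr r' _ h
  refine card_lt_card ⟨fun x hx => ?_, fun hsub => ?_⟩
  · rw [mem_filter] at hx ⊢
    exact ⟨hx.1, hx.2.trans h⟩
  exact lt_irrefl r (mem_filter.1 (hsub (mem_filter.2 ⟨hr, h⟩))).2

lemma card_filter_image_lt {S : Finset ℕ} {g : ℕ → ℕ} (hg : StrictMonoOn g S) {r : ℕ}
    (hr : r ∈ S) : #{x ∈ S.image g | x < g r} = #{x ∈ S | x < r} := by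
  rw [filter_image, card_image_of_injOn (hg.injOn.mono (filter_subset _ S))]
  exact congrArg card (filter_congr fun x hx => hg.lt_iff_lt hx hr)

def occRows (C : Config) : Finset ℕ := C.biUnion rowsOf

lemma mem_occRows {C : Config} {a : ℕ} : a ∈ occRows C ↔ ∃ p ∈ C, a ∈ rowsOf p :=
  mem_biUnion

def CrossAt (C : Config) (a : ℕ) : Prop := ∃ p ∈ C, a ∈ rowsOf p ∧ a + 1 ∈ rowsOf p

lemma CrossAt.mem_occRows {C : Config} {a : ℕ} (h : CrossAt C a) : a ∈ occRows C :=
  let ⟨p, hp, ha, _⟩ := h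
  mem_biUnion.2 ⟨p, hp, ha⟩

/-- The occupied rows `r ∈ [L, M)` across which no placement passes from row `r` to `r + 1`:
the places where an empty row may be inserted right above `r`. -/
noncomputable def cutRows (C : Config) (L M : ℕ) : Finset ℕ :=
  {r ∈ Ico L M | r ∈ occRows C ∧ ¬ CrossAt C r}

noncomputable def cutIndex (C : Config) (L M r : ℕ) : ℕ := #{x ∈ cutRows C L M | x < r}

noncomputable def placementsAbove (C : Config) (L : ℕ) : Config := {p ∈ C | ∀ a ∈ rowsOf p, L < a}

def Anchored (k t : ℕ) (C : Config) : Prop := ∀ j' ≤ t, BottomAnchored C (j' * k + 1)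

lemma mem_cutRows {C : Config} {L M r : ℕ} :
    r ∈ cutRows C L M ↔ (L ≤ r ∧ r < M) ∧ r ∈ occRows C ∧ ¬ CrossAt C r := by
  rw [cutRows, mem_filter, mem_Ico]

lemma bottomAnchored_iff {C : Config} {ρ : ℕ} :
    BottomAnchored C ρ ↔ ρ ∈ occRows C ∧ ∀ p ∈ C, ρ ∈ rowsOf p → ∀ a ∈ rowsOf p, ρ ≤ a := by
  simp only [BottomAnchored, TouchesFromAbove, mem_occRows, mem_rowsOf]
  grind

section Counting

variable {k n M s t : ℕ} {C : Config}

lemma placementsAbove_subset (L : ℕ) : placementsAbove C L ⊆ C := filter_subset _ C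

lemma card_placementsAbove_add_le (hk : 1 ≤ k) (hC : IsFreeConfig k n M s C)
    (hanch : Anchored k t C) : #(placementsAbove C (t * k + 1)) + (t + 1) ≤ s := by
  have hlower : #(range (t + 1)) ≤ #(C \ placementsAbove C (t * k + 1)) := by
    refine card_le_card_of_forall_subsingleton (fun j' p => j' * k + 1 ∈ rowsOf p)
      (fun j' hj' => ?_) ?_
    · rw [mem_range_succ_iff] at hj'
      obtain ⟨p, hp, hrow⟩ := mem_occRows.1 (bottomAnchored_iff.1 (hanch j' hj')).1
      refine ⟨p, mem_sdiff.2 ⟨hp, fun hup => ?_⟩, hrow⟩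
      have := (mem_filter.1 hup).2 _ hrow
      have := Nat.mul_le_mul_right k hj'
      omega
    · -- a placement touching two anchored rows from above has both as its lowest row
      rintro p hp a ⟨ha, hap⟩ b ⟨hb, hbp⟩
      have hpC := (mem_sdiff.1 hp).1
      have := (bottomAnchored_iff.1 (hanch a (mem_range_succ_iff.1 ha))).2 p hpC hap _ hbp
      have := (bottomAnchored_iff.1 (hanch b (mem_range_succ_iff.1 hb))).2 p hpC hbp _ hap
      exact Nat.eq_of_mul_eq_mul_right hk (by omega)
  rw [card_range, card_sdiff_of_subset (placementsAbove_subset _), hC.1] at hlower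
  have := card_le_card (placementsAbove_subset (C := C) (t * k + 1))
  omega

lemma card_cutRows_le_card_placementsAbove (hk : 1 ≤ k) (hC : ∀ p ∈ C, IsFreePlacement k n M p)
    (htop : M ∈ occRows C) (L : ℕ) : #(cutRows C L M) ≤ #(placementsAbove C L) := by
  -- a cut row `r` is sent to the placement holding the lowest occupied row above `r`
  refine card_le_card_of_forall_subsingleton
    (fun r p => (∀ a ∈ rowsOf p, r < a) ∧ ∃ a ∈ rowsOf p, ∀ b ∈ occRows C, r < b → a ≤ b) ?_ ?_
  · intro r hr
    obtain ⟨⟨hLr, hrM⟩, -, hncross⟩ := mem_cutRows.1 hr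
    have hne : {b ∈ occRows C | r < b}.Nonempty := ⟨M, mem_filter.2 ⟨htop, hrM⟩⟩
    obtain ⟨hocc, hra⟩ := mem_filter.1 (min'_mem _ hne)
    obtain ⟨p, hp, hap⟩ := mem_occRows.1 hocc
    have habove : ∀ b ∈ rowsOf p, r < b := by
      intro b hb
      by_contra! hbr
      exact hncross ⟨p, hp, (hC p hp).mem_rowsOf_of_le_of_le hk hb hap hbr hra.le,
        (hC p hp).mem_rowsOf_of_le_of_le hk hb hap (by omega) hra⟩
    exact ⟨p, mem_filter.2 ⟨hp, fun b hb => hLr.trans_lt (habove b hb)⟩, habove, _, hap,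
      fun b hb hrb => min'_le _ _ (mem_filter.2 ⟨hb, hrb⟩)⟩
  · have key : ∀ p r r', r ∈ cutRows C L M → r' ∈ cutRows C L M → r < r' →
        (∃ a ∈ rowsOf p, ∀ b ∈ occRows C, r < b → a ≤ b) → ¬ ∀ a ∈ rowsOf p, r' < a := by
      rintro p r r' - hr' hrr' ⟨a, ha, hmin⟩ habove
      have := hmin r' (mem_cutRows.1 hr').2.1 hrr'
      have := habove a ha
      omega
    intro p _ r ⟨hr, habove, hlow⟩ r' ⟨hr', habove', hlow'⟩
    by_contra hne
    rcases Nat.lt_or_gt_of_ne hne with h | h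
    · exact key p r r' hr hr' h hlow habove'
    · exact key p r' r hr' hr h hlow' habove

lemma height_le_of_rows_occupied (hk : 1 ≤ k) (hC : ∀ p ∈ C, IsFreePlacement k n M p) {L : ℕ}
    (hfull : ∀ r, L ≤ r → r < M → r ∈ occRows C) :
    M ≤ L + #(cutRows C L M) + (k - 1) * (#(placementsAbove C L) + 1) := by
  set crossedAbove := (placementsAbove C L).biUnion fun p => {a ∈ rowsOf p | a + 1 ∈ rowsOf p}
  have hsplit : Ico L M ⊆ cutRows C L M ∪ {r ∈ Ico L M | CrossAt C r} := by
    intro r hr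
    by_cases hcr : CrossAt C r
    · exact mem_union_right _ (mem_filter.2 ⟨hr, hcr⟩)
    · have := mem_Ico.1 hr
      exact mem_union_left _ (mem_cutRows.2 ⟨this, hfull r this.1 this.2, hcr⟩)
  -- a crossing placement reaching down to row `L` only crosses rows below `L + k - 1`
  have hcross : {r ∈ Ico L M | CrossAt C r} ⊆ Ico L (L + (k - 1)) ∪ crossedAbove := by
    intro r hr
    obtain ⟨hr, p, hp, hrp, hr1p⟩ := mem_filter.1 hr
    by_cases hup : ∀ a ∈ rowsOf p, L < a
    · exact mem_union_right _
        (mem_biUnion.2 ⟨p, mem_filter.2 ⟨hp, hup⟩, mem_filter.2 ⟨hrp, hr1p⟩⟩)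
    · obtain ⟨a, ha, haL⟩ : ∃ a ∈ rowsOf p, a ≤ L := by simpa using hup
      have := (hC p hp).lt_add_of_mem_rowsOf hk ha hr1p
      rw [mem_Ico] at hr
      exact mem_union_left _ (mem_Ico.2 ⟨hr.1, by omega⟩)
  have hcrossedAbove : #crossedAbove ≤ #(placementsAbove C L) * (k - 1) :=
    card_biUnion_le_card_mul _ _ _ fun p hp =>
      (hC p (placementsAbove_subset L hp)).card_filter_succ_mem_rowsOf_le hk
  have h1 := card_le_card hsplit
  have h2 := card_union_le (cutRows C L M) {r ∈ Ico L M | CrossAt C r}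
  have h3 := card_le_card hcross
  have h4 := card_union_le (Ico L (L + (k - 1))) crossedAbove
  simp only [Nat.card_Ico] at h1 h4
  have : (k - 1) * (#(placementsAbove C L) + 1) = #(placementsAbove C L) * (k - 1) + (k - 1) := by
    ring
  omega

noncomputable def activeRows (k t M : ℕ) (T : Finset ℕ) (C : Config) : Finset ℕ :=
  {r ∈ cutRows C (t * k + 1) M | cutIndex C (t * k + 1) M r ∈ T ∨ r + 1 ∉ occRows C}

lemma cutIndex_lt_card_placementsAbove (hk : 1 ≤ k)
    (hC : ∀ p ∈ C, IsFreePlacement k n M p) (htop : M ∈ occRows C) {r : ℕ}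
    (hr : r ∈ cutRows C (t * k + 1) M) :
    cutIndex C (t * k + 1) M r < #(placementsAbove C (t * k + 1)) :=
  (card_filter_lt_lt_card hr).trans_le (card_cutRows_le_card_placementsAbove hk hC htop _)

lemma activeRows_nonempty {j : ℕ} {T : Finset ℕ} (hk : 1 ≤ k)
    (hC : IsFreeConfig k n M (t + 2 + j) C) (hanch : Anchored k t C) (htop : M ∈ occRows C)
    (hT : T ⊆ range (j + 1)) (hm : k * (t + 2 + j) < M + #T) :
    (activeRows k t M T C).Nonempty := by
  by_contra hne
  simp only [activeRows, not_nonempty_iff_eq_empty, filter_eq_empty_iff, not_or, not_not] at hne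
  have hfull : ∀ r, t * k + 1 ≤ r → r < M → r ∈ occRows C := by
    intro r hLr
    induction r, hLr using Nat.le_induction with
    | base => exact fun _ => (bottomAnchored_iff.1 (hanch t le_rfl)).1
    | succ r hLr ih =>
      intro hr
      by_cases hcr : CrossAt C r
      · obtain ⟨p, hp, -, hr1⟩ := hcr
        exact mem_occRows.2 ⟨p, hp, hr1⟩
      · exact (hne (mem_cutRows.2 ⟨⟨hLr, by omega⟩, ih (by omega), hcr⟩)).2
  have hu : #(placementsAbove C (t * k + 1)) + (t + 1) ≤ t + 2 + j :=
    card_placementsAbove_add_le hk hC hanch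
  have hcuts : #T + #(cutRows C (t * k + 1) M) ≤ j + 1 := by
    rw [← card_image_of_injOn (s := cutRows C (t * k + 1) M)
        (strictMonoOn_card_filter_lt _).injOn,
      ← card_union_of_disjoint (disjoint_right.2 ?_)]
    · refine (card_le_card (union_subset hT fun i hi => ?_)).trans (card_range _).le
      obtain ⟨r, hr, rfl⟩ := mem_image.1 hi
      have := cutIndex_lt_card_placementsAbove hk hC.2.1 htop hr
      rw [mem_range]
      exact this.trans_le (by omega)
    · rintro i hi hiT
      obtain ⟨r, hr, rfl⟩ := mem_image.1 hi
      exact (hne hr).1 hiT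
  have hh := height_le_of_rows_occupied hk hC.2.1 hfull
  have : (k - 1) * (#(placementsAbove C (t * k + 1)) + 1) ≤ (k - 1) * (j + 2) :=
    Nat.mul_le_mul_left _ (by omega)
  have : k * (t + 2 + j) = t * k + 1 + (j + 1) + (k - 1) * (j + 2) := by
    obtain ⟨k, rfl⟩ := Nat.exists_eq_add_of_le' hk
    simp only [Nat.add_sub_cancel]
    ring
  omega

end Counting

def relabelRows (g : ℕ → ℕ) (p : Finset (ℕ × ℕ)) : Finset (ℕ × ℕ) :=
  p.image fun q => (q.1, g q.2)

def mapRows (g : ℕ → ℕ) (C : Config) : Config := C.image (relabelRows g)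

/-- `g a - a` is constant on `S`, stated without truncated subtraction. -/
def ShiftOn (g : ℕ → ℕ) (S : Finset ℕ) : Prop := ∀ a ∈ S, ∀ b ∈ S, g a + b = g b + a

section Relabel

variable {g g' : ℕ → ℕ} {p : Finset (ℕ × ℕ)} {C : Config}

lemma rowsOf_relabelRows : rowsOf (relabelRows g p) = (rowsOf p).image g := by
  simp only [rowsOf, relabelRows, image_image]
  rfl

lemma occRows_mapRows : occRows (mapRows g C) = (occRows C).image g := by
  simp only [occRows, mapRows, biUnion_image, image_biUnion, rowsOf_relabelRows]

lemma relabelRows_relabelRows (h : ∀ a ∈ rowsOf p, g' (g a) = a) :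
    relabelRows g' (relabelRows g p) = p := by
  rw [relabelRows, relabelRows, image_image]
  conv_rhs => rw [← image_id (s := p)]
  exact image_congr fun q hq => Prod.ext rfl (h _ (mem_rowsOf.2 ⟨q, hq, rfl⟩))

lemma mapRows_mapRows (h : Set.LeftInvOn g' g (occRows C)) : mapRows g' (mapRows g C) = C := by
  rw [mapRows, mapRows, image_image]
  conv_rhs => rw [← image_id (s := C)]
  exact image_congr fun p hp =>
    relabelRows_relabelRows fun a ha => h (mem_occRows.2 ⟨p, hp, ha⟩)

lemma _root_.IsFreePlacement.relabelRows {k n M M' : ℕ} (hk : 1 ≤ k)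
    (hp : IsFreePlacement k n M p) (hg : ShiftOn g (rowsOf p))
    (hM' : ∀ a ∈ rowsOf p, 1 ≤ g a ∧ g a ≤ M') : IsFreePlacement k n M' (relabelRows g p) := by
  rcases hp with ⟨c, r, h1, h2, -, -, rfl⟩ | ⟨c, r, h1, h2, -, -, rfl⟩
  · have hr : r ∈ rowsOf (horizKmer k c r) :=
      mem_rowsOf.2 ⟨(c, r), mem_image.2 ⟨0, mem_range.2 hk, by simp⟩, rfl⟩
    refine Or.inl ⟨c, g r, h1, h2, (hM' r hr).1, (hM' r hr).2, ?_⟩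
    simp only [relabelRows, horizKmer, image_image]
    rfl
  · have hrows : ∀ i < k, r + i ∈ rowsOf (vertKmer k c r) := fun i hi =>
      mem_rowsOf.2 ⟨(c, r + i), mem_image.2 ⟨i, mem_range.2 hi, rfl⟩, rfl⟩
    have hgi : ∀ i < k, g (r + i) = g r + i := fun i hi => by
      have := hg _ (hrows i hi) _ (hrows 0 hk)
      rw [add_zero] at this
      omega
    have hlast := (hM' _ (hrows (k - 1) (by omega))).2
    refine Or.inr ⟨c, g r, h1, h2, (hM' r (by simpa using hrows 0 hk)).1, by
      rw [hgi _ (by omega)] at hlast; omega, ?_⟩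
    simp only [relabelRows, vertKmer, image_image]
    exact image_congr fun i hi => by simp [hgi i (mem_range.1 hi)]

lemma _root_.IsFreeConfig.mapRows {k n M M' s : ℕ} (hC : IsFreeConfig k n M s C)
    (hinv : Set.LeftInvOn g' g (occRows C))
    (hp : ∀ p ∈ C, IsFreePlacement k n M' (relabelRows g p)) :
    IsFreeConfig k n M' s (mapRows g C) := by
  have hback : ∀ p ∈ C, relabelRows g' (relabelRows g p) = p := fun p hp =>
    relabelRows_relabelRows fun a ha => hinv (mem_occRows.2 ⟨p, hp, ha⟩)
  refine ⟨?_, ?_, ?_⟩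
  · rw [KmerRowGap.mapRows, card_image_of_injOn, hC.1]
    intro p hp p' hp' h
    rw [← hback p hp, ← hback p' hp', h]
  · rintro _ hq'
    obtain ⟨q, hq, rfl⟩ := mem_image.1 hq'
    exact hp q hq
  · rintro _ hp' _ hq' hne
    obtain ⟨p, hp, rfl⟩ := mem_image.1 (mem_coe.1 hp')
    obtain ⟨q, hq, rfl⟩ := mem_image.1 (mem_coe.1 hq')
    have hdisj : Disjoint p q := hC.2.2 hp hq fun h => hne (h ▸ rfl)
    rw [disjoint_left] at hdisj ⊢
    simp only [relabelRows, mem_image, not_exists, not_and]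
    rintro _ ⟨x, hx, rfl⟩ y hy hxy
    obtain ⟨h1, h2⟩ : y.1 = x.1 ∧ g y.2 = g x.2 := Prod.ext_iff.1 hxy
    have hrow : y.2 = x.2 := by
      rw [← hinv (mem_occRows.2 ⟨q, hq, mem_rowsOf.2 ⟨y, hy, rfl⟩⟩),
        ← hinv (mem_occRows.2 ⟨p, hp, mem_rowsOf.2 ⟨x, hx, rfl⟩⟩)]
      exact congrArg g' h2
    exact hdisj hx (Prod.ext h1 hrow ▸ hy)

lemma crossAt_mapRows_iff (hshift : ∀ p ∈ C, ShiftOn g (rowsOf p)) {a : ℕ} :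
    CrossAt (mapRows g C) a ↔ ∃ b, g b = a ∧ CrossAt C b := by
  constructor
  · rintro ⟨_, hp', ha, ha1⟩
    obtain ⟨p, hp, rfl⟩ := mem_image.1 hp'
    rw [rowsOf_relabelRows, mem_image] at ha ha1
    obtain ⟨b, hb, rfl⟩ := ha
    obtain ⟨b', hb', hb'g⟩ := ha1
    have := hshift p hp _ hb _ hb'
    obtain rfl : b' = b + 1 := by omega
    exact ⟨b, rfl, p, hp, hb, hb'⟩
  · rintro ⟨b, rfl, p, hp, hb, hb1⟩
    have := hshift p hp _ hb _ hb1
    refine ⟨relabelRows g p, mem_image_of_mem _ hp, ?_, ?_⟩ <;> rw [rowsOf_relabelRows]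
    · exact mem_image_of_mem _ hb
    · exact mem_image.2 ⟨b + 1, hb1, by omega⟩

variable {L M M' : ℕ}

lemma cutRows_mapRows (hshift : ∀ p ∈ C, ShiftOn g (rowsOf p)) (hinj : Set.InjOn g (occRows C))
    (hrange : ∀ b ∈ occRows C, (L ≤ g b ∧ g b < M') ↔ (L ≤ b ∧ b < M)) :
    cutRows (mapRows g C) L M' = (cutRows C L M).image g := by
  ext a
  simp only [mem_image, mem_cutRows, occRows_mapRows, crossAt_mapRows_iff hshift]
  constructor
  · rintro ⟨hLM, ⟨b, hb, rfl⟩, hncross⟩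
    exact ⟨b, ⟨(hrange b hb).1 hLM, hb, fun h => hncross ⟨b, rfl, h⟩⟩, rfl⟩
  · rintro ⟨b, ⟨hLM, hb, hncross⟩, rfl⟩
    refine ⟨(hrange b hb).2 hLM, ⟨b, hb, rfl⟩, ?_⟩
    rintro ⟨b', hb', hcross⟩
    exact hncross (hinj hcross.mem_occRows hb hb' ▸ hcross)

lemma cutIndex_mapRows (hshift : ∀ p ∈ C, ShiftOn g (rowsOf p))
    (hmono : StrictMonoOn g (occRows C))
    (hrange : ∀ b ∈ occRows C, (L ≤ g b ∧ g b < M') ↔ (L ≤ b ∧ b < M)) {r : ℕ}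
    (hr : r ∈ cutRows C L M) :
    cutIndex (mapRows g C) L M' (g r) = cutIndex C L M r := by
  have hcut_occ : (cutRows C L M : Set ℕ) ⊆ occRows C := fun x hx => (mem_cutRows.1 hx).2.1
  rw [cutIndex, cutIndex, cutRows_mapRows hshift hmono.injOn hrange]
  exact card_filter_image_lt (hmono.mono hcut_occ) hr

lemma _root_.BottomAnchored.mapRows {ρ : ℕ} (h : BottomAnchored C ρ) (hρ : g ρ = ρ)
    (hmono : StrictMonoOn g (occRows C)) : BottomAnchored (mapRows g C) ρ := by
  rw [bottomAnchored_iff] at h ⊢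
  refine ⟨occRows_mapRows ▸ hρ ▸ mem_image_of_mem g h.1, ?_⟩
  rintro _ hp' hρp _ ha
  obtain ⟨p, hp, rfl⟩ := mem_image.1 hp'
  rw [rowsOf_relabelRows, mem_image] at hρp ha
  obtain ⟨b, hb, hbρ⟩ := hρp
  obtain ⟨a, ha, rfl⟩ := ha
  have hocc : ∀ x ∈ rowsOf p, x ∈ occRows C := fun x hx => mem_occRows.2 ⟨p, hp, hx⟩
  obtain rfl : b = ρ := hmono.injOn (hocc b hb) h.1 (hbρ.trans hρ.symm)
  exact hρ ▸ (hmono.le_iff_le (hocc b hb) (hocc a ha)).2 (h.2 p hp hb a ha)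

end Relabel

/-- Row renumbering when an empty row is inserted right above row `w`. -/
def liftAbove (w a : ℕ) : ℕ := if w < a then a + 1 else a

/-- Row renumbering when row `w + 1` is deleted. -/
def dropAbove (w a : ℕ) : ℕ := if w + 1 < a then a - 1 else a

section RowMaps

variable {w : ℕ}

lemma liftAbove_of_le {a : ℕ} (h : a ≤ w) : liftAbove w a = a := if_neg (by omega)

lemma dropAbove_of_le {a : ℕ} (h : a ≤ w) : dropAbove w a = a := if_neg (by omega)

lemma lt_liftAbove {a : ℕ} (h : w < a) : w < liftAbove w a := by
  rw [liftAbove, if_pos h]; omega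

lemma lt_dropAbove {a : ℕ} (h : w < a) : w < dropAbove w a := by
  unfold dropAbove; split_ifs <;> omega

lemma strictMono_liftAbove : StrictMono (liftAbove w) := by
  intro a b h
  unfold liftAbove
  split_ifs <;> omega

lemma strictMonoOn_dropAbove : StrictMonoOn (dropAbove w) {a | a ≠ w + 1} := by
  intro a (ha : a ≠ w + 1) b (hb : b ≠ w + 1) h
  unfold dropAbove
  split_ifs <;> omega

lemma dropAbove_liftAbove (a : ℕ) : dropAbove w (liftAbove w a) = a := by
  unfold liftAbove dropAbove
  split_ifs <;> omega

lemma liftAbove_dropAbove {a : ℕ} (h : a ≠ w + 1) : liftAbove w (dropAbove w a) = a := by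
  unfold liftAbove dropAbove
  split_ifs <;> omega

lemma shiftOn_liftAbove {S : Finset ℕ} (hS : (∀ a ∈ S, a ≤ w) ∨ ∀ a ∈ S, w < a) :
    ShiftOn (liftAbove w) S := by
  intro a ha b hb
  unfold liftAbove
  rcases hS with hS | hS <;>
  · have := hS a ha
    have := hS b hb
    split_ifs <;> omega

lemma shiftOn_dropAbove {S : Finset ℕ} (hS : (∀ a ∈ S, a ≤ w) ∨ ∀ a ∈ S, w < a)
    (hw : w + 1 ∉ S) : ShiftOn (dropAbove w) S := by
  intro a ha b hb
  have : a ≠ w + 1 := fun h => hw (h ▸ ha)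
  have : b ≠ w + 1 := fun h => hw (h ▸ hb)
  unfold dropAbove
  rcases hS with hS | hS <;>
  · have := hS a ha
    have := hS b hb
    split_ifs <;> omega

end RowMaps

def IsCounted (k n s t M : ℕ) (C : Config) : Prop :=
  IsFreeConfig k n M s C ∧ Anchored k t C ∧ M ∈ occRows C

section Shifts

variable {k n s t M w : ℕ} {C : Config}

lemma rowsOf_le_or_lt_of_mem_cutRows (hk : 1 ≤ k) (hC : ∀ p ∈ C, IsFreePlacement k n M p)
    {L M' : ℕ} (hw : w ∈ cutRows C L M') {p : Finset (ℕ × ℕ)} (hp : p ∈ C) :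
    (∀ a ∈ rowsOf p, a ≤ w) ∨ ∀ a ∈ rowsOf p, w < a :=
  (hC p hp).rowsOf_le_or_lt hk fun h => (mem_cutRows.1 hw).2.2 ⟨p, hp, h⟩

lemma anchor_le_of_mem_cutRows {M' : ℕ} (hw : w ∈ cutRows C (t * k + 1) M') {j' : ℕ}
    (hj' : j' ≤ t) : j' * k + 1 ≤ w :=
  (Nat.add_le_add_right (Nat.mul_le_mul_right k hj') 1).trans (mem_cutRows.1 hw).1.1

lemma IsCounted.mapRows_liftAbove (hk : 1 ≤ k) (h : IsCounted k n s t M C)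
    (hw : w ∈ cutRows C (t * k + 1) M) :
    IsCounted k n s t (M + 1) (mapRows (liftAbove w) C) := by
  obtain ⟨hC, hanch, htop⟩ := h
  have hwM := (mem_cutRows.1 hw).1.2
  refine ⟨hC.mapRows (fun a _ => dropAbove_liftAbove a) fun p hp => ?_, fun j' hj' => ?_, ?_⟩
  · refine (hC.2.1 p hp).relabelRows hk
      (shiftOn_liftAbove (rowsOf_le_or_lt_of_mem_cutRows hk hC.2.1 hw hp)) fun a ha => ?_
    have := mem_Icc.1 ((hC.2.1 p hp).rowsOf_subset_Icc hk ha)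
    unfold liftAbove
    split_ifs <;> omega
  · exact (hanch j' hj').mapRows (liftAbove_of_le (anchor_le_of_mem_cutRows hw hj'))
      (strictMono_liftAbove.strictMonoOn _)
  · rw [occRows_mapRows]
    exact mem_image.2 ⟨M, htop, by rw [liftAbove, if_pos hwM]⟩

lemma IsCounted.mapRows_dropAbove (hk : 1 ≤ k) (h : IsCounted k n s t M C)
    (hw : w ∈ cutRows C (t * k + 1) M) (hw1 : w + 1 ∉ occRows C) :
    IsCounted k n s t (M - 1) (mapRows (dropAbove w) C) := by
  obtain ⟨hC, hanch, htop⟩ := h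
  have hwM := (mem_cutRows.1 hw).1.2
  have hne : ∀ a ∈ occRows C, a ≠ w + 1 := fun a ha h => hw1 (h ▸ ha)
  refine ⟨hC.mapRows (fun a ha => liftAbove_dropAbove (hne a ha)) fun p hp => ?_,
    fun j' hj' => ?_, ?_⟩
  · have hp1 : w + 1 ∉ rowsOf p := fun h => hw1 (mem_occRows.2 ⟨p, hp, h⟩)
    refine (hC.2.1 p hp).relabelRows hk
      (shiftOn_dropAbove (rowsOf_le_or_lt_of_mem_cutRows hk hC.2.1 hw hp) hp1) fun a ha => ?_
    have := mem_Icc.1 ((hC.2.1 p hp).rowsOf_subset_Icc hk ha)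
    have := hne a (mem_occRows.2 ⟨p, hp, ha⟩)
    have := hne M htop
    unfold dropAbove
    split_ifs <;> omega
  · exact (hanch j' hj').mapRows (dropAbove_of_le (anchor_le_of_mem_cutRows hw hj'))
      (strictMonoOn_dropAbove.mono hne)
  · rw [occRows_mapRows]
    have := hne M htop
    exact mem_image.2 ⟨M, htop, by rw [dropAbove, if_pos (by omega)]⟩

end Shifts

section Toggle

variable {k t M M' w : ℕ} {T T' : Finset ℕ} {C : Config} {g : ℕ → ℕ}

lemma isLeast_activeRows_mapRows (hshift : ∀ p ∈ C, ShiftOn g (rowsOf p))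
    (hmono : StrictMonoOn g (occRows C))
    (hrange : ∀ b ∈ occRows C, (t * k + 1 ≤ g b ∧ g b < M') ↔ (t * k + 1 ≤ b ∧ b < M))
    (hfix : ∀ b ≤ w, g b = b) (hgt : ∀ b, w < b → w < g b)
    (hleast : IsLeast (activeRows k t M T C : Set ℕ) w)
    (hT : ∀ i < cutIndex C (t * k + 1) M w, i ∈ T' ↔ i ∈ T)
    (hw' : w ∈ activeRows k t M' T' (mapRows g C)) :
    IsLeast (activeRows k t M' T' (mapRows g C) : Set ℕ) w := by
  have hbelow : ∀ (S : Finset ℕ), ∀ x ≤ w, x ∈ S.image g ↔ x ∈ S := by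
    refine fun S x hx => ⟨fun h => ?_, fun h => mem_image.2 ⟨x, h, hfix x hx⟩⟩
    obtain ⟨b, hb, rfl⟩ := mem_image.1 h
    have hbw : b ≤ w := not_lt.1 fun hb' => (hgt b hb').not_ge hx
    rwa [hfix b hbw] at hx ⊢
  refine ⟨hw', fun a ha => not_lt.1 fun haw => ?_⟩
  have hw := (mem_filter.1 hleast.1).1
  rw [mem_coe, activeRows, mem_filter, cutRows_mapRows hshift hmono.injOn hrange,
    hbelow _ _ haw.le, occRows_mapRows, hbelow _ _ haw] at ha
  obtain ⟨hacut, hact⟩ := ha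
  have hidx := cutIndex_mapRows hshift hmono hrange hacut
  rw [hfix a haw.le] at hidx
  have hlt : cutIndex C (t * k + 1) M a < cutIndex C (t * k + 1) M w :=
    strictMonoOn_card_filter_lt _ hacut hw haw
  rw [hidx, hT _ hlt] at hact
  exact (hleast.2 (mem_filter.2 ⟨hacut, hact⟩)).not_gt haw

variable (k t) (m : ℕ)

noncomputable def toggleAt (T : Finset ℕ) (C : Config) (w : ℕ) : (_ : Finset ℕ) × Config :=
  let ℓ := cutIndex C (t * k + 1) (m - #T) w
  if ℓ ∈ T then ⟨T.erase ℓ, mapRows (liftAbove w) C⟩ else ⟨insert ℓ T, mapRows (dropAbove w) C⟩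

noncomputable def toggle (x : (_ : Finset ℕ) × Config) : (_ : Finset ℕ) × Config :=
  if h : (activeRows k t (m - #x.1) x.1 x.2).Nonempty then
    toggleAt k t m x.1 x.2 ((activeRows k t (m - #x.1) x.1 x.2).min' h)
  else x

variable {k t m}

lemma toggle_eq_toggleAt (hM : M + #T = m) (h : IsLeast (activeRows k t M T C : Set ℕ) w) :
    toggle k t m ⟨T, C⟩ = toggleAt k t m T C w := by
  obtain rfl : M = m - #T := by omega
  simp only [toggle]
  rw [dif_pos ⟨w, h.1⟩, (isLeast_min' _ _).unique h]

lemma toggleAt_of_mem (hM : M + #T = m) (hℓ : cutIndex C (t * k + 1) M w ∈ T) :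
    toggleAt k t m T C w =
      ⟨T.erase (cutIndex C (t * k + 1) M w), mapRows (liftAbove w) C⟩ := by
  rw [toggleAt, show m - #T = M by omega, if_pos hℓ]

lemma toggleAt_of_notMem (hM : M + #T = m) (hℓ : cutIndex C (t * k + 1) M w ∉ T) :
    toggleAt k t m T C w =
      ⟨insert (cutIndex C (t * k + 1) M w) T, mapRows (dropAbove w) C⟩ := by
  rw [toggleAt, show m - #T = M by omega, if_neg hℓ]

lemma toggle_liftAbove {n s : ℕ} (hk : 1 ≤ k) (hC : IsCounted k n s t M C) (hM : M + #T = m)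
    (hleast : IsLeast (activeRows k t M T C : Set ℕ) w)
    (hℓ : cutIndex C (t * k + 1) M w ∈ T) :
    toggle k t m ⟨T.erase (cutIndex C (t * k + 1) M w), mapRows (liftAbove w) C⟩ = ⟨T, C⟩ := by
  set ℓ := cutIndex C (t * k + 1) M w
  obtain ⟨⟨hLw, hwM⟩, -, -⟩ := mem_cutRows.1 (mem_filter.1 hleast.1).1
  have hw := (mem_filter.1 hleast.1).1
  have hM' : M + 1 + #(T.erase ℓ) = m := by have := card_erase_add_one hℓ; omega
  have hshift : ∀ p ∈ C, ShiftOn (liftAbove w) (rowsOf p) := fun p hp =>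
    shiftOn_liftAbove (rowsOf_le_or_lt_of_mem_cutRows hk hC.1.2.1 hw hp)
  have hmono := (strictMono_liftAbove (w := w)).strictMonoOn (occRows C)
  have hrange : ∀ b ∈ occRows C, (t * k + 1 ≤ liftAbove w b ∧ liftAbove w b < M + 1) ↔
      (t * k + 1 ≤ b ∧ b < M) := fun b _ => by unfold liftAbove; split_ifs <;> omega
  have hidx := cutIndex_mapRows hshift hmono hrange hw
  rw [liftAbove_of_le le_rfl] at hidx
  have hw' : w ∈ activeRows k t (M + 1) (T.erase ℓ) (mapRows (liftAbove w) C) := by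
    refine mem_filter.2 ⟨?_, Or.inr ?_⟩
    · rw [cutRows_mapRows hshift hmono.injOn hrange]
      exact mem_image.2 ⟨w, hw, liftAbove_of_le le_rfl⟩
    · rw [occRows_mapRows, mem_image]
      rintro ⟨b, -, hb⟩
      unfold liftAbove at hb
      split_ifs at hb <;> omega
  have hleast' := isLeast_activeRows_mapRows hshift hmono hrange (fun _ => liftAbove_of_le)
    (fun _ => lt_liftAbove) hleast
    (fun i hi => mem_erase.trans (and_iff_right hi.ne)) hw'
  rw [toggle_eq_toggleAt hM' hleast', toggleAt_of_notMem hM' (hidx ▸ notMem_erase ℓ T), hidx,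
    insert_erase hℓ, mapRows_mapRows fun a _ => dropAbove_liftAbove a]

lemma toggle_dropAbove {n s : ℕ} (hk : 1 ≤ k) (hC : IsCounted k n s t M C) (hM : M + #T = m)
    (hleast : IsLeast (activeRows k t M T C : Set ℕ) w)
    (hℓ : cutIndex C (t * k + 1) M w ∉ T) :
    toggle k t m ⟨insert (cutIndex C (t * k + 1) M w) T, mapRows (dropAbove w) C⟩ = ⟨T, C⟩ := by
  set ℓ := cutIndex C (t * k + 1) M w
  obtain ⟨hw, hw1⟩ := mem_filter.1 hleast.1
  replace hw1 : w + 1 ∉ occRows C := hw1.resolve_left hℓ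
  obtain ⟨⟨hLw, hwM⟩, -, -⟩ := mem_cutRows.1 hw
  have hne : ∀ a ∈ occRows C, a ≠ w + 1 := fun a ha h => hw1 (h ▸ ha)
  have hMw := hne M hC.2.2
  have hM' : M - 1 + #(insert ℓ T) = m := by rw [card_insert_of_notMem hℓ]; omega
  have hshift : ∀ p ∈ C, ShiftOn (dropAbove w) (rowsOf p) := fun p hp =>
    shiftOn_dropAbove (rowsOf_le_or_lt_of_mem_cutRows hk hC.1.2.1 hw hp)
      fun h => hw1 (mem_occRows.2 ⟨p, hp, h⟩)
  have hmono : StrictMonoOn (dropAbove w) (occRows C) := strictMonoOn_dropAbove.mono hne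
  have hrange : ∀ b ∈ occRows C, (t * k + 1 ≤ dropAbove w b ∧ dropAbove w b < M - 1) ↔
      (t * k + 1 ≤ b ∧ b < M) := fun b hb => by
    have := hne b hb
    unfold dropAbove
    split_ifs <;> omega
  have hidx := cutIndex_mapRows hshift hmono hrange hw
  rw [dropAbove_of_le le_rfl] at hidx
  have hw' : w ∈ activeRows k t (M - 1) (insert ℓ T) (mapRows (dropAbove w) C) := by
    refine mem_filter.2 ⟨?_, Or.inl (hidx ▸ mem_insert_self ℓ T)⟩
    rw [cutRows_mapRows hshift hmono.injOn hrange]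
    exact mem_image.2 ⟨w, hw, dropAbove_of_le le_rfl⟩
  have hleast' := isLeast_activeRows_mapRows hshift hmono hrange (fun _ => dropAbove_of_le)
    (fun _ => lt_dropAbove) hleast (fun i hi => mem_insert.trans (or_iff_right hi.ne)) hw'
  rw [toggle_eq_toggleAt hM' hleast', toggleAt_of_mem hM' (hidx ▸ mem_insert_self ℓ T), hidx,
    erase_insert hℓ, mapRows_mapRows fun a ha => liftAbove_dropAbove (hne a ha)]

end Toggle

noncomputable def countedConfigs (k n s t M : ℕ) : Finset Config :=
  {C ∈ (Icc 1 n ×ˢ Icc 1 M).powerset.powerset | IsCounted k n s t M C}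

noncomputable def objects (k n s t j m : ℕ) : Finset ((_ : Finset ℕ) × Config) :=
  (range (j + 1)).powerset.sigma fun T => countedConfigs k n s t (m - #T)

section Objects

variable {k n s t j m M : ℕ}

lemma mem_countedConfigs {C : Config} : C ∈ countedConfigs k n s t M ↔ IsCounted k n s t M C := by
  rw [countedConfigs, mem_filter, and_iff_right_iff_imp]
  intro h
  exact mem_powerset.2 fun p hp => mem_powerset.2 (h.1.2.1 p hp).subset_box

lemma mem_objects {T : Finset ℕ} {C : Config} :
    ⟨T, C⟩ ∈ objects k n s t j m ↔ T ⊆ range (j + 1) ∧ IsCounted k n s t (m - #T) C := by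
  rw [objects, mem_sigma, mem_powerset, mem_countedConfigs]

lemma toggle_spec (hk : 1 ≤ k) (hm : k * (t + 2 + j) < m) {x : (_ : Finset ℕ) × Config}
    (hx : x ∈ objects k n (t + 2 + j) t j m) :
    toggle k t m x ∈ objects k n (t + 2 + j) t j m ∧ toggle k t m (toggle k t m x) = x ∧
      (-1 : ℤ) ^ #(toggle k t m x).1 = -(-1) ^ #x.1 := by
  obtain ⟨T, C⟩ := x
  obtain ⟨hT, hC⟩ := mem_objects.1 hx
  have hTj : #T ≤ j + 1 := by simpa using card_le_card hT
  have := Nat.le_mul_of_pos_left (t + 2 + j) hk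
  set M := m - #T
  have hM : M + #T = m := by omega
  have hne := activeRows_nonempty hk hC.1 hC.2.1 hC.2.2 hT (by omega)
  have hleast := isLeast_min' _ hne
  set w := (activeRows k t M T C).min' hne
  have hw := (mem_filter.1 hleast.1).1
  rw [toggle_eq_toggleAt hM hleast]
  by_cases hℓ : cutIndex C (t * k + 1) M w ∈ T
  · have hcard := card_erase_add_one hℓ
    rw [toggleAt_of_mem hM hℓ, toggle_liftAbove hk hC hM hleast hℓ]
    refine ⟨mem_objects.2 ⟨(erase_subset _ _).trans hT, ?_⟩, rfl, ?_⟩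
    · rw [show m - #(T.erase _) = M + 1 by omega]
      exact hC.mapRows_liftAbove hk hw
    · rw [← hcard, pow_succ]
      ring
  · have hcard := card_insert_of_notMem hℓ
    have hℓj : cutIndex C (t * k + 1) M w < j + 1 :=
      (cutIndex_lt_card_placementsAbove hk hC.1.2.1 hC.2.2 hw).trans_le
        (by have := card_placementsAbove_add_le hk hC.1 hC.2.1; omega)
    rw [toggleAt_of_notMem hM hℓ, toggle_dropAbove hk hC hM hleast hℓ]
    refine ⟨mem_objects.2 ⟨insert_subset (mem_range.2 hℓj) hT, ?_⟩, rfl, ?_⟩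
    · rw [show m - #(insert _ T) = M - 1 by omega]
      exact hC.mapRows_dropAbove hk hw ((mem_filter.1 hleast.1).2.resolve_left hℓ)
    · rw [hcard, pow_succ]
      ring

lemma sum_neg_one_pow_card_objects_eq_zero (hk : 1 ≤ k) (hm : k * (t + 2 + j) < m) :
    ∑ x ∈ objects k n (t + 2 + j) t j m, (-1 : ℤ) ^ #x.1 = 0 := by
  refine sum_involution (fun x _ => toggle k t m x) (fun x hx => ?_) (fun x hx _ hfix => ?_)
    (fun x hx => (toggle_spec hk hm hx).1) (fun x hx => (toggle_spec hk hm hx).2.1)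
  · rw [(toggle_spec hk hm hx).2.2, add_neg_cancel]
  · have h := (toggle_spec hk hm hx).2.2
    rw [hfix] at h
    rcases neg_one_pow_eq_or ℤ #x.1 with h' | h' <;> rw [h'] at h <;> norm_num at h

lemma sum_neg_one_pow_card_objects :
    ∑ x ∈ objects k n s t j m, (-1 : ℤ) ^ #x.1 =
      ∑ i ∈ range (j + 2), (-1 : ℤ) ^ i * ((j + 1).choose i : ℤ) *
        (#(countedConfigs k n s t (m - i)) : ℤ) := by
  rw [objects, sum_sigma]
  simp only [sum_const, nsmul_eq_mul]
  rw [sum_powerset_apply_card (fun i => (#(countedConfigs k n s t (m - i)) : ℤ) * (-1) ^ i),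
    card_range]
  refine sum_congr rfl fun i _ => ?_
  rw [nsmul_eq_mul]
  ring

lemma ncard_eq_card_countedConfigs :
    {C | IsFreeConfig k n M s C ∧ (∀ j' ≤ t, BottomAnchored C (j' * k + 1)) ∧
      ∃ p ∈ C, ∃ q ∈ p, q.2 = M}.ncard = #(countedConfigs k n s t M) := by
  rw [← Set.ncard_coe_finset]
  congr 1
  ext C
  simp only [Set.mem_ofPred_eq, mem_coe, mem_countedConfigs, IsCounted, Anchored, mem_occRows,
    mem_rowsOf]

end Objects

end KmerRowGap

theorem j_unrestricted_with_top_general (k n s : ℕ) (hk : 2 ≤ k)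
    (t j : ℕ) (hs : s = t + 2 + j) (m : ℕ) (hm : k * s + 1 ≤ m) :
    ∑ i ∈ Finset.range (j + 2),
        (-1 : ℤ) ^ i * ((j + 1).choose i : ℤ) *
          ({C | IsFreeConfig k n (m - i) s C ∧
              (∀ j' ≤ t, BottomAnchored C (j' * k + 1)) ∧
              ∃ p ∈ C, ∃ q ∈ p, q.2 = m - i}.ncard : ℤ) = 0 := by
  subst hs
  simp only [KmerRowGap.ncard_eq_card_countedConfigs]
  rw [← KmerRowGap.sum_neg_one_pow_card_objects]
  exact KmerRowGap.sum_neg_one_pow_card_objects_eq_zero (by omega) hm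

/-- Lemma on `j` unrestricted `k`-mers, with top restriction: for `s = t + 2 + j`
and `m ≥ k s + 1`, `∑_{i=0}^{j+1} (-1)^i C(j+1,i) A(m-i) = 0`, where `A(m')` counts
configurations of `s` `k`-mers on the `n × m'` lattice with rows `j'k+1`
(`0 ≤ j' ≤ t`) bottom-anchored and some placement occupying a site in row `m'`. -/
theorem j_unrestricted_with_top (k n s : ℕ) (hk : 2 ≤ k) (hn : 1 ≤ n) (hs1 : 1 ≤ s)
    (t j : ℕ) (hs : s = t + 2 + j) (m : ℕ) (hm : k * s + 1 ≤ m) :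
    ∑ i ∈ Finset.range (j + 2),
        (-1 : ℤ) ^ i * ((j + 1).choose i : ℤ) *
          ({C | IsFreeConfig k n (m - i) s C ∧
              (∀ j' ≤ t, BottomAnchored C (j' * k + 1)) ∧
              ∃ p ∈ C, ∃ q ∈ p, q.2 = m - i}.ncard : ℤ) = 0 :=
  j_unrestricted_with_top_general k n s hk t j hs m hm
end
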